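/- arXiv:2104.00279 — 11 statements merged into one kernel-verified Lean document; each statement's English description precedes it below -/
import Mathlib

section
/- Let [A] be an interval m×n matrix with midpoint A_c and entrywise-nonnegative radius Δ, and let [x] = [x̲, x̄] be an interval vector in ℝ^n (x̲ ≤ x̄ componentwise). For b ∈ ℝ^m, the following are equivalent: (i) b ∈ Ω_∀∃([A],[x]), i.e., for every matrix A with |A − A_c| ≤ Δ entrywise there exists x with x̲ ≤ x ≤ x̄ such that A x = b; (ii) for every sign vector s ∈ {−1, +1}^m there exist x₁, x₂ ∈ ℝ^n with x₁ ≥ 0, x₂ ≥ 0, x̲ ≤ x₁ − x₂ ≤ x̄, and b = (A_c − diag(s)Δ)x₁ − (A_c + diag(s)Δ)x₂, where diag(s) is the diagonal matrix with diagonal entries s. -/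
/-!
Both directions are separation arguments in `ℝᵐ`. A solution of the sign system for `s` is the
same as `x = x₁ - x₂ ∈ [x]` and `y = x₁ + x₂ ≥ |x|` with `b = A_c x - diag(s) Δ y`.

If `b ∉ A[x]` for some `A ∈ [A]`, separate `b` from the compact convex set `A[x]` by `p` and take
`s = sign p`; then `pᵀb = pᵀA_c x - |p|ᵀΔy ≤ pᵀA x` for the solution of that sign system.

If the sign system for `s` has no solution, separate `b` from its solution set (truncated to a
compact set) by `p`. With `c = pᵀA_c` and `d = |p|ᵀΔ`, the coordinatewise saddle point
`min_{|eⱼ| ≤ dⱼ} max_{xⱼ ∈ [x̲ⱼ, x̄ⱼ]} (cⱼ - eⱼ) xⱼ = max_{xⱼ} (cⱼ xⱼ - dⱼ |xⱼ|)` produces a matrix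
`A = A_c - E ∈ [A]` with `pᵀE = e` for which `pᵀA x < pᵀb` on all of `[x]`.
-/

open Matrix Finset

lemma exists_abs_le_one_mul_eq {e d : ℝ} (h : |e| ≤ d) : ∃ t : ℝ, |t| ≤ 1 ∧ t * d = e := by
  rcases ((abs_nonneg e).trans h).eq_or_lt with hd | hd
  · subst hd
    exact ⟨0, by simp, by simpa using (abs_nonpos_iff.1 h).symm⟩
  · exact ⟨e / d, by rwa [abs_div, abs_of_pos hd, div_le_one hd], div_mul_cancel₀ e hd.ne'⟩

lemma exists_saddle_sub_mul {l u d : ℝ} (hlu : l ≤ u) (hd : 0 ≤ d) (c : ℝ) :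
    ∃ e t, |e| ≤ d ∧ t ∈ Set.Icc l u ∧ ∀ x ∈ Set.Icc l u, (c - e) * x ≤ c * t - d * |t| := by
  have hdd : |d| ≤ d := (abs_of_nonneg hd).le
  have hnd : |-d| ≤ d := by rwa [abs_neg]
  rcases le_total 0 l with hl | hl
  · rcases le_total d c with hc | hc
    · refine ⟨d, u, hdd, ⟨hlu, le_rfl⟩, fun x hx => ?_⟩
      rw [abs_of_nonneg (hl.trans hlu)]; nlinarith [hx.2]
    · refine ⟨d, l, hdd, ⟨le_rfl, hlu⟩, fun x hx => ?_⟩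
      rw [abs_of_nonneg hl]; nlinarith [hx.1]
  rcases le_total u 0 with hu | hu
  · rcases le_total (-d) c with hc | hc
    · refine ⟨-d, u, hnd, ⟨hlu, le_rfl⟩, fun x hx => ?_⟩
      rw [abs_of_nonpos hu]; nlinarith [hx.2]
    · refine ⟨-d, l, hnd, ⟨le_rfl, hlu⟩, fun x hx => ?_⟩
      rw [abs_of_nonpos hl]; nlinarith [hx.1]
  rcases le_total |c| d with hc | hc
  · exact ⟨c, 0, hc, ⟨hl, hu⟩, fun x _ => by simp⟩
  rcases le_total 0 c with hc0 | hc0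
  · rw [abs_of_nonneg hc0] at hc
    refine ⟨d, u, hdd, ⟨hlu, le_rfl⟩, fun x hx => ?_⟩
    rw [abs_of_nonneg hu]; nlinarith [hx.2]
  · rw [abs_of_nonpos hc0] at hc
    refine ⟨-d, l, hnd, ⟨le_rfl, hlu⟩, fun x hx => ?_⟩
    rw [abs_of_nonpos hl]; nlinarith [hx.1]

lemma exists_sign_mul_eq_abs {m : Type*} (p : m → ℝ) :
    ∃ s : m → ℝ, (∀ i, s i = 1 ∨ s i = -1) ∧ p * s = |p| := by
  refine ⟨fun i => if 0 ≤ p i then 1 else -1, fun i => by by_cases hp : 0 ≤ p i <;> simp [hp],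
    funext fun i => ?_⟩
  by_cases hp : 0 ≤ p i
  · simp [hp, abs_of_nonneg hp]
  · simp [hp, abs_of_neg (not_le.1 hp)]

section

variable {m n : Type*}

lemma exists_saddle_sub_dotProduct [Fintype n] {xl xu d : n → ℝ} (hx : xl ≤ xu) (hd : 0 ≤ d)
    (c : n → ℝ) : ∃ e xs, |e| ≤ d ∧ xs ∈ Set.Icc xl xu ∧
      ∀ x ∈ Set.Icc xl xu, (c - e) ⬝ᵥ x ≤ c ⬝ᵥ xs - d ⬝ᵥ |xs| := by
  choose e xs he hxs hsaddle using fun j => exists_saddle_sub_mul (hx j) (hd j) (c j)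
  refine ⟨e, xs, he, ⟨fun j => (hxs j).1, fun j => (hxs j).2⟩, fun x hx => ?_⟩
  simp only [dotProduct, ← sum_sub_distrib]
  exact sum_le_sum fun j _ => hsaddle j (x j) ⟨hx.1 j, hx.2 j⟩

lemma exists_abs_le_vecMul_eq [Fintype m] {Δ : Matrix m n ℝ} (hΔ : ∀ i j, 0 ≤ Δ i j)
    (p : m → ℝ) {e : n → ℝ} (he : |e| ≤ |p| ᵥ* Δ) :
    ∃ E : Matrix m n ℝ, (∀ i j, |E i j| ≤ Δ i j) ∧ p ᵥ* E = e := by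
  obtain ⟨s, hs, hps⟩ := exists_sign_mul_eq_abs p
  choose t ht hte using fun j => exists_abs_le_one_mul_eq (he j)
  refine ⟨fun i j => s i * Δ i j * t j, fun i j => ?_, funext fun j => ?_⟩
  · have hsi : |s i| = 1 := by rcases hs i with h | h <;> simp [h]
    rw [abs_mul, abs_mul, hsi, one_mul, abs_of_nonneg (hΔ i j)]
    exact mul_le_of_le_one_right (hΔ i j) (ht j)
  · rw [← hte j, ← hps]
    simp only [vecMul, dotProduct, mul_sum, Pi.mul_apply]
    exact sum_congr rfl fun i _ => by ring

lemma exists_dotProduct_lt_of_notMem [Fintype m] {K : Set (m → ℝ)} (hconv : Convex ℝ K)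
    (hclosed : IsClosed K) {b : m → ℝ} (hb : b ∉ K) :
    ∃ p : m → ℝ, ∀ k ∈ K, p ⬝ᵥ k < p ⬝ᵥ b := by
  classical
  obtain ⟨f, u, hfK, hub⟩ := geometric_hahn_banach_closed_point hconv hclosed hb
  have hf : ∀ v, f v = (fun i => f fun j => if i = j then 1 else 0) ⬝ᵥ v := fun v => by
    simpa [dotProduct, mul_comm] using LinearMap.pi_apply_eq_sum_univ f.toLinearMap v
  exact ⟨_, fun k hk => by rw [← hf, ← hf]; exact (hfK k hk).trans hub⟩

lemma dotProduct_mulVec_le_of_abs_le [Fintype m] [Fintype n] {M Δ : Matrix m n ℝ}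
    (hM : ∀ i j, |M i j| ≤ Δ i j) {x y : n → ℝ} (hxy : |x| ≤ y) (p : m → ℝ) :
    p ⬝ᵥ (M *ᵥ x) ≤ |p| ⬝ᵥ (Δ *ᵥ y) := by
  simp only [dotProduct, mulVec, mul_sum]
  refine sum_le_sum fun i _ => sum_le_sum fun j _ => ?_
  calc p i * (M i j * x j) ≤ |p i| * (|M i j| * |x j|) := by
        rw [← abs_mul, ← abs_mul]; exact le_abs_self _
    _ ≤ |p i| * (Δ i j * y j) := mul_le_mul_of_nonneg_left
        (mul_le_mul (hM i j) (hxy j) (abs_nonneg _) ((abs_nonneg _).trans (hM i j))) (abs_nonneg _)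

variable [Fintype m] [Fintype n] [DecidableEq m]

lemma dotProduct_sign_system (Ac Δ : Matrix m n ℝ) (s p : m → ℝ) (x₁ x₂ : n → ℝ) :
    p ⬝ᵥ ((Ac - diagonal s * Δ) *ᵥ x₁ - (Ac + diagonal s * Δ) *ᵥ x₂) =
      p ⬝ᵥ (Ac *ᵥ (x₁ - x₂)) - (p * s) ⬝ᵥ (Δ *ᵥ (x₁ + x₂)) := by
  have hps : p ᵥ* diagonal s = p * s := funext (vecMul_diagonal p s)
  simp only [sub_mulVec, add_mulVec, mulVec_sub, mulVec_add, ← mulVec_mulVec, dotProduct_sub,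
    dotProduct_add, dotProduct_mulVec p (diagonal s), hps]
  ring

theorem exists_mem_Icc_mulVec_eq_of_sign_systems {Ac Δ A : Matrix m n ℝ} {xl xu : n → ℝ}
    {b : m → ℝ} (h : ∀ s : m → ℝ, (∀ i, s i = 1 ∨ s i = -1) → ∃ x₁ x₂ : n → ℝ,
      0 ≤ x₁ ∧ 0 ≤ x₂ ∧ x₁ - x₂ ∈ Set.Icc xl xu ∧
        b = (Ac - diagonal s * Δ) *ᵥ x₁ - (Ac + diagonal s * Δ) *ᵥ x₂)
    (hA : ∀ i j, |A i j - Ac i j| ≤ Δ i j) : ∃ x ∈ Set.Icc xl xu, A *ᵥ x = b := by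
  by_contra hb
  have hbK : b ∉ A.mulVecLin '' Set.Icc xl xu := fun ⟨x, hx, hAx⟩ => hb ⟨x, hx, hAx⟩
  obtain ⟨p, hp⟩ := exists_dotProduct_lt_of_notMem ((convex_Icc xl xu).linear_image _)
    (isCompact_Icc.image A.mulVecLin.continuous_of_finiteDimensional).isClosed hbK
  obtain ⟨s, hs, hps⟩ := exists_sign_mul_eq_abs p
  obtain ⟨x₁, x₂, h₁, h₂, hx, rfl⟩ := h s hs
  have hsep := hp _ ⟨x₁ - x₂, hx, rfl⟩
  have hdev : p ⬝ᵥ ((Ac - A) *ᵥ (x₁ - x₂)) ≤ |p| ⬝ᵥ (Δ *ᵥ (x₁ + x₂)) :=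
    dotProduct_mulVec_le_of_abs_le (fun i j => abs_sub_comm (Ac i j) (A i j) ▸ hA i j)
      (fun j => (abs_sub (x₁ j) (x₂ j)).trans_eq
        (by rw [abs_of_nonneg (h₁ j), abs_of_nonneg (h₂ j)]; rfl)) p
  rw [dotProduct_sign_system, hps, mulVecLin_apply] at hsep
  rw [sub_mulVec, dotProduct_sub] at hdev
  linarith

theorem sign_system_solvable_of_forall_exists {Ac Δ : Matrix m n ℝ} (hΔ : ∀ i j, 0 ≤ Δ i j)
    {xl xu : n → ℝ} (hx : xl ≤ xu) {b : m → ℝ}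
    (h : ∀ A : Matrix m n ℝ, (∀ i j, |A i j - Ac i j| ≤ Δ i j) → ∃ x ∈ Set.Icc xl xu, A *ᵥ x = b)
    {s : m → ℝ} (hs : ∀ i, |s i| ≤ 1) : ∃ x₁ x₂ : n → ℝ,
      0 ≤ x₁ ∧ 0 ≤ x₂ ∧ x₁ - x₂ ∈ Set.Icc xl xu ∧
        b = (Ac - diagonal s * Δ) *ᵥ x₁ - (Ac + diagonal s * Δ) *ᵥ x₂ := by
  set L : (n → ℝ) × (n → ℝ) →ₗ[ℝ] m → ℝ :=
    (Ac - diagonal s * Δ).mulVecLin ∘ₗ LinearMap.fst ℝ _ _ -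
      (Ac + diagonal s * Δ).mulVecLin ∘ₗ LinearMap.snd ℝ _ _
  -- The bounds `x₁ ≤ xu⁺`, `x₂ ≤ xl⁻` make `D` compact and keep `(xs⁺, xs⁻) ∈ D` for `xs ∈ [x]`.
  set D : Set ((n → ℝ) × (n → ℝ)) := Set.Icc 0 xu⁺ ×ˢ Set.Icc 0 xl⁻ ∩
    (LinearMap.fst ℝ (n → ℝ) (n → ℝ) - LinearMap.snd ℝ (n → ℝ) (n → ℝ)) ⁻¹' Set.Icc xl xu
  by_contra hb
  have hbD : b ∉ L '' D := fun ⟨q, hq, hLq⟩ => hb ⟨q.1, q.2, hq.1.1.1, hq.1.2.1, hq.2, hLq.symm⟩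
  have hDconv : Convex ℝ D :=
    ((convex_Icc _ _).prod (convex_Icc _ _)).inter ((convex_Icc _ _).linear_preimage _)
  have hDcpt : IsCompact D := (isCompact_Icc.prod isCompact_Icc).inter_right
    (isClosed_Icc.preimage (LinearMap.continuous_of_finiteDimensional _))
  obtain ⟨p, hp⟩ := exists_dotProduct_lt_of_notMem (hDconv.linear_image L)
    (hDcpt.image L.continuous_of_finiteDimensional).isClosed hbD
  obtain ⟨e, xs, he, hxs, hsaddle⟩ := exists_saddle_sub_dotProduct hx (d := |p| ᵥ* Δ)
    (fun j => sum_nonneg fun i _ => mul_nonneg (abs_nonneg (p i)) (hΔ i j)) (p ᵥ* Ac)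
  obtain ⟨E, hE, hpE⟩ := exists_abs_le_vecMul_eq hΔ p he
  obtain ⟨x, hx, rfl⟩ := h (Ac - E) fun i j => by simpa using hE i j
  have hxsD : (xs⁺, xs⁻) ∈ D := ⟨⟨⟨posPart_nonneg _, posPart_mono hxs.2⟩,
    ⟨negPart_nonneg _, negPart_anti hxs.1⟩⟩, by simpa [posPart_sub_negPart] using hxs⟩
  have hps : (p * s) ⬝ᵥ (Δ *ᵥ |xs|) ≤ |p| ⬝ᵥ (Δ *ᵥ |xs|) :=
    dotProduct_le_dotProduct_of_nonneg_right
      (fun i => (le_abs_self _).trans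
        (by simpa [abs_mul] using mul_le_of_le_one_right (abs_nonneg (p i)) (hs i)))
      (fun i => dotProduct_nonneg_of_nonneg (hΔ i) (abs_nonneg xs))
  refine lt_irrefl (p ⬝ᵥ ((Ac - E) *ᵥ x)) ?_
  calc p ⬝ᵥ ((Ac - E) *ᵥ x) = (p ᵥ* Ac - e) ⬝ᵥ x := by rw [dotProduct_mulVec, vecMul_sub, hpE]
    _ ≤ (p ᵥ* Ac) ⬝ᵥ xs - (|p| ᵥ* Δ) ⬝ᵥ |xs| := hsaddle x hx
    _ = p ⬝ᵥ (Ac *ᵥ xs) - |p| ⬝ᵥ (Δ *ᵥ |xs|) := by rw [dotProduct_mulVec, dotProduct_mulVec]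
    _ ≤ p ⬝ᵥ (Ac *ᵥ xs) - (p * s) ⬝ᵥ (Δ *ᵥ |xs|) := by gcongr
    _ = p ⬝ᵥ L (xs⁺, xs⁻) := by
      simp only [L, LinearMap.sub_apply, LinearMap.comp_apply, LinearMap.fst_apply,
        LinearMap.snd_apply, mulVecLin_apply]
      rw [dotProduct_sign_system, posPart_sub_negPart, posPart_add_negPart]
    _ < p ⬝ᵥ ((Ac - E) *ᵥ x) := hp _ ⟨_, hxsD, rfl⟩

end

/-- Characterization of membership `b ∈ Ω_∀∃([A],[x])` via solvability of
`2^m` linear systems, one for each sign vector `s ∈ {−1,+1}^m`. -/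
theorem mem_omega_forall_exists_iff_sign_systems
    {m n : ℕ} (Ac Δ : Matrix (Fin m) (Fin n) ℝ) (hΔ : ∀ i j, 0 ≤ Δ i j)
    (xl xu : Fin n → ℝ) (hx : ∀ j, xl j ≤ xu j) (b : Fin m → ℝ) :
    (∀ A : Matrix (Fin m) (Fin n) ℝ, (∀ i j, |A i j - Ac i j| ≤ Δ i j) →
        ∃ x : Fin n → ℝ, (∀ j, xl j ≤ x j ∧ x j ≤ xu j) ∧ A.mulVec x = b) ↔
    (∀ s : Fin m → ℝ, (∀ i, s i = 1 ∨ s i = -1) →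
        ∃ x₁ x₂ : Fin n → ℝ,
          (∀ j, 0 ≤ x₁ j) ∧ (∀ j, 0 ≤ x₂ j) ∧
          (∀ j, xl j ≤ x₁ j - x₂ j ∧ x₁ j - x₂ j ≤ xu j) ∧
          b = (Ac - Matrix.diagonal s * Δ).mulVec x₁
              - (Ac + Matrix.diagonal s * Δ).mulVec x₂) := by
  constructor
  · intro h s hs
    obtain ⟨x₁, x₂, h₁, h₂, hx₁₂, hb⟩ := sign_system_solvable_of_forall_exists hΔ hx
      (fun A hA => by
        obtain ⟨x, hxI, hAx⟩ := h A hA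
        exact ⟨x, ⟨fun j => (hxI j).1, fun j => (hxI j).2⟩, hAx⟩)
      (s := s) fun i => by rcases hs i with h | h <;> simp [h]
    exact ⟨x₁, x₂, h₁, h₂, fun j => ⟨hx₁₂.1 j, hx₁₂.2 j⟩, hb⟩
  · intro h A hA
    obtain ⟨x, hxI, hAx⟩ := exists_mem_Icc_mulVec_eq_of_sign_systems (fun s hs => by
        obtain ⟨x₁, x₂, h₁, h₂, hx₁₂, hb⟩ := h s hs
        exact ⟨x₁, x₂, h₁, h₂, ⟨fun j => (hx₁₂ j).1, fun j => (hx₁₂ j).2⟩, hb⟩) hA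
    exact ⟨x, fun j => ⟨hxI.1 j, hxI.2 j⟩, hAx⟩
end

section
/- Let [A] be an interval m×n matrix with midpoint A_c and entrywise-nonnegative radius Δ, and let [x] = [x̲, x̄] be an interval vector in ℝ^n with midpoint x_c = (x̲+x̄)/2, radius ρ = (x̄−x̲)/2 satisfying ρ_j > 0 for all j, and magnitude μ given by μ_j = max(|x̲_j|, |x̄_j|). Suppose A_c has full row rank, so that A_c A_cᵀ is invertible, and let A_c† = A_cᵀ (A_c A_cᵀ)⁻¹ be its Moore–Penrose pseudoinverse. Set r = min_{j=1,…,n} (ρ_j − (|A_c†| Δ μ)_j)/ρ_j, where |A_c†| is the matrix of entrywise absolute values. If r ≥ 0, then Ω_∀∃(A_c, [y]) ⊆ Ω_∀∃([A],[x]), where [y] = [x_c − rρ, x_c + rρ]; that is, for every y ∈ ℝ^n with |y − x_c| ≤ rρ componentwise and every A with |A − A_c| ≤ Δ entrywise, there exists x with x̲ ≤ x ≤ x̄ such that A x = A_c y. -/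
/-!
Let `M = A_c† (A − A_c)`. Because `A_c A_c† = I`, every solution of the fixed-point equation
`x = y − M x` satisfies `A x = A_c x + (A − A_c) x = A_c y`, so it suffices to find a fixed point of
`G x = y − M x` in the box `[x̲, x̄]`. Entrywise `|M| ≤ |A_c†| Δ`, and the definition of `r` says
`|A_c†| Δ μ ≤ (1 − r) ρ`. Since `|x| ≤ μ` on the box and `|y − x_c| ≤ r ρ`, the map `G` sends the
box into itself, and it is nonexpansive for the weighted norm `max_j |x_j| / ρ_j`.

A nonexpansive self-map `G` of a compact convex set `K` has a fixed point: the contractions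
`x ↦ c + t (G x − c)`, `t < 1`, have fixed points `x_t` with `‖x_t − G x_t‖ ≤ (1 − t) diam K`, so
the continuous function `x ↦ ‖x − G x‖` has minimum `0` on `K`.
-/

open Matrix Finset

open Set Filter Topology Metric

section NonexpansiveFixedPoint

variable {E : Type*} [NormedAddCommGroup E] [NormedSpace ℝ E] {K : Set E} {G : E → E}

theorem exists_dist_self_le_of_lipschitzOnWith_one (hK : IsCompact K) (hKc : Convex ℝ K)
    (hG : LipschitzOnWith 1 G K) (hGK : MapsTo G K K) {c : E} (hc : c ∈ K) {t : ℝ}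
    (ht₀ : 0 ≤ t) (ht₁ : t < 1) : ∃ x ∈ K, dist x (G x) ≤ (1 - t) * diam K := by
  set F : E → E := fun x => AffineMap.lineMap c (G x) t
  have hFK : MapsTo F K K := fun x hx => hKc.lineMap_mem hc (hGK hx) ⟨ht₀, ht₁.le⟩
  have hF : ContractingWith ⟨t, ht₀⟩ (hFK.restrict F K K) := by
    refine ⟨ht₁, LipschitzOnWith.mapsToRestrict hFK ?_⟩
    refine LipschitzOnWith.of_dist_le_mul fun x hx x' hx' => ?_
    simp only [F, AffineMap.lineMap_apply_module', dist_add_right, dist_smul₀, dist_sub_right,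
      Real.norm_of_nonneg ht₀]
    exact mul_le_mul_of_nonneg_left (by simpa using hG.dist_le_mul x hx x' hx') ht₀
  obtain ⟨x, hx, hfix, -⟩ :=
    ContractingWith.exists_fixedPoint' hK.isComplete hFK hF hc (edist_ne_top _ _)
  refine ⟨x, hx, ?_⟩
  calc dist x (G x) = dist (F x) (G x) := by rw [hfix.eq]
    _ = (1 - t) * dist c (G x) := by
      rw [dist_lineMap_right, Real.norm_of_nonneg (sub_nonneg.2 ht₁.le)]
    _ ≤ (1 - t) * diam K :=
      mul_le_mul_of_nonneg_left (dist_le_diam_of_mem hK.isBounded hc (hGK hx))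
        (sub_nonneg.2 ht₁.le)

theorem exists_fixedPoint_of_lipschitzOnWith_one (hK : IsCompact K) (hKc : Convex ℝ K)
    (hne : K.Nonempty) (hG : LipschitzOnWith 1 G K) (hGK : MapsTo G K K) :
    ∃ x ∈ K, G x = x := by
  obtain ⟨c, hc⟩ := hne
  obtain ⟨x, hx, hmin⟩ :=
    hK.exists_isMinOn ⟨c, hc⟩
      (continuous_dist.comp_continuousOn (continuousOn_id.prodMk hG.continuousOn))
  refine ⟨x, hx, (dist_le_zero.1 ?_).symm⟩
  have hlim : Tendsto (fun t : ℝ => (1 - t) * diam K) (𝓝[<] 1) (𝓝 0) := by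
    have hcont : Continuous fun t : ℝ => (1 - t) * diam K := by fun_prop
    simpa using (hcont.tendsto 1).mono_left nhdsWithin_le_nhds
  refine ge_of_tendsto hlim ?_
  filter_upwards [Ioo_mem_nhdsLT one_pos] with t ⟨ht₀, ht₁⟩
  obtain ⟨x', hx', hdist⟩ := exists_dist_self_le_of_lipschitzOnWith_one hK hKc hG hGK hc ht₀.le ht₁
  exact (hmin hx').trans hdist

end NonexpansiveFixedPoint

theorem exists_fixedPoint_of_dist_div_le {ι : Type*} [Fintype ι] {a b ρ : ι → ℝ}
    (hρ : ∀ i, 0 < ρ i) (hab : a ≤ b) {G : (ι → ℝ) → ι → ℝ} (hGK : MapsTo G (Icc a b) (Icc a b))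
    (hG : ∀ x ∈ Icc a b, ∀ x' ∈ Icc a b, dist (G x / ρ) (G x' / ρ) ≤ dist (x / ρ) (x' / ρ)) :
    ∃ x ∈ Icc a b, G x = x := by
  have hmul_div : ∀ v, ρ * v / ρ = v := fun v => funext fun i => mul_div_cancel_left₀ _ (hρ i).ne'
  have hdiv_mul : ∀ v, ρ * (v / ρ) = v := fun v => funext fun i => mul_div_cancel₀ _ (hρ i).ne'
  have hmem : ∀ v, v ∈ Icc (a / ρ) (b / ρ) ↔ ρ * v ∈ Icc a b := fun v => by
    simp only [Set.mem_Icc, Pi.le_def, Pi.div_apply, Pi.mul_apply, div_le_iff₀' (hρ _),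
      le_div_iff₀' (hρ _)]
  obtain ⟨v, hv, hfix⟩ := exists_fixedPoint_of_lipschitzOnWith_one (G := fun v => G (ρ * v) / ρ)
    isCompact_Icc (convex_Icc _ _) ⟨a / ρ, (hmem _).2 (by rw [hdiv_mul]; exact left_mem_Icc.2 hab)⟩
    (LipschitzOnWith.of_dist_le_mul fun v hv v' hv' => by
      simpa only [NNReal.coe_one, one_mul, hmul_div] using hG _ ((hmem v).1 hv) _ ((hmem v').1 hv'))
    (fun v hv => (hmem _).2 (by rw [hdiv_mul]; exact hGK ((hmem v).1 hv)))
  refine ⟨ρ * v, (hmem v).1 hv, ?_⟩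
  simpa only [hdiv_mul] using congrArg (ρ * ·) hfix

section OrderedRing

variable {R ι κ : Type*} [Ring R] [LinearOrder R] [IsStrictOrderedRing R]

theorem abs_mulVec_le_mulVec [Fintype κ] {P N : Matrix ι κ R} {v w : κ → R}
    (hP : ∀ i k, |P i k| ≤ N i k) (hv : ∀ k, |v k| ≤ w k) (i : ι) : |(P *ᵥ v) i| ≤ (N *ᵥ w) i :=
  (abs_sum_le_sum_abs _ _).trans <| sum_le_sum fun k _ => by
    rw [abs_mul]
    exact mul_le_mul (hP i k) (hv k) (abs_nonneg _) ((abs_nonneg _).trans (hP i k))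

theorem abs_mul_sub_mulVec_le [Fintype ι] [Fintype κ] {A Ac Δ : Matrix κ ι R} (P : Matrix ι κ R)
    (hA : ∀ i k, |A i k - Ac i k| ≤ Δ i k) {v w : ι → R} (hv : ∀ k, |v k| ≤ w k) (j : ι) :
    |((P * (A - Ac)) *ᵥ v) j| ≤ (P.map (fun t => |t|) *ᵥ (Δ *ᵥ w)) j := by
  rw [← mulVec_mulVec]
  exact abs_mulVec_le_mulVec (fun _ _ => le_rfl) (abs_mulVec_le_mulVec hA hv) j

end OrderedRing

theorem mulVec_eq_of_eq_sub_mul_sub_mulVec {R ι κ : Type*} [Ring R] [Fintype ι] [Fintype κ]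
    [DecidableEq κ] {A Ac : Matrix κ ι R} {P : Matrix ι κ R} (hP : Ac * P = 1) {x y : ι → R}
    (hx : x = y - (P * (A - Ac)) *ᵥ x) :
    A *ᵥ x = Ac *ᵥ y := by
  have hAc : Ac *ᵥ x = Ac *ᵥ y - (A - Ac) *ᵥ x := by
    conv_lhs => rw [hx]
    rw [mulVec_sub, mulVec_mulVec, ← Matrix.mul_assoc, hP, Matrix.one_mul]
  calc A *ᵥ x = Ac *ᵥ x + (A - Ac) *ᵥ x := by rw [← add_mulVec, add_sub_cancel]
    _ = Ac *ᵥ y := by rw [hAc, sub_add_cancel]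

section InnerApproximation

variable {ι κ : Type*} [Fintype ι] [Fintype κ] {A Ac Δ : Matrix κ ι ℝ} {P : Matrix ι κ ℝ}
  {xl xu xc ρ μ y : ι → ℝ} {r : ℝ}

theorem mapsTo_Icc_sub_mul_sub_mulVec (hxc : ∀ j, xc j = (xl j + xu j) / 2)
    (hρ : ∀ j, ρ j = (xu j - xl j) / 2) (hμ : ∀ j, μ j = max |xl j| |xu j|)
    (hA : ∀ i k, |A i k - Ac i k| ≤ Δ i k)
    (hg : ∀ j, (P.map (fun t => |t|) *ᵥ (Δ *ᵥ μ)) j ≤ (1 - r) * ρ j)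
    (hy : ∀ j, |y j - xc j| ≤ r * ρ j) :
    MapsTo (fun x => y - (P * (A - Ac)) *ᵥ x) (Icc xl xu) (Icc xl xu) := by
  intro x ⟨hl, hu⟩
  have hMx := abs_mul_sub_mulVec_le P hA (w := μ) fun k => hμ k ▸ abs_le_max_abs_abs (hl k) (hu k)
  refine ⟨fun j => ?_, fun j => ?_⟩ <;>
  · have := abs_le.1 ((hMx j).trans (hg j))
    have := abs_le.1 (hy j)
    simp only [Pi.sub_apply]
    linarith [hxc j, hρ j]

theorem dist_sub_mul_sub_mulVec_div_le (hρ : ∀ j, 0 < ρ j) (hρμ : ∀ j, ρ j ≤ μ j) (hr : 0 ≤ r)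
    (hA : ∀ i k, |A i k - Ac i k| ≤ Δ i k)
    (hg : ∀ j, (P.map (fun t => |t|) *ᵥ (Δ *ᵥ μ)) j ≤ (1 - r) * ρ j) (x x' : ι → ℝ) :
    dist ((y - (P * (A - Ac)) *ᵥ x) / ρ) ((y - (P * (A - Ac)) *ᵥ x') / ρ) ≤
      dist (x / ρ) (x' / ρ) := by
  set d := dist (x / ρ) (x' / ρ)
  have hd : 0 ≤ d := dist_nonneg
  have hdiff : ∀ k, |(x' - x) k| ≤ (d • μ) k := fun k => by
    have hk : |x k / ρ k - x' k / ρ k| ≤ d := by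
      simpa only [Real.dist_eq, Pi.div_apply] using dist_le_pi_dist (x / ρ) (x' / ρ) k
    rw [div_sub_div_same, abs_div, abs_of_pos (hρ k), div_le_iff₀ (hρ k), abs_sub_comm] at hk
    rw [Pi.sub_apply, Pi.smul_apply, smul_eq_mul]
    exact hk.trans (mul_le_mul_of_nonneg_left (hρμ k) hd)
  refine (dist_pi_le_iff hd).2 fun j => ?_
  have hM := abs_mul_sub_mulVec_le P hA hdiff j
  rw [mulVec_smul, mulVec_smul, Pi.smul_apply, smul_eq_mul, mulVec_sub] at hM
  rw [Real.dist_eq, Pi.div_apply, Pi.div_apply, div_sub_div_same, abs_div, abs_of_pos (hρ j),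
    div_le_iff₀ (hρ j)]
  calc |(y - (P * (A - Ac)) *ᵥ x) j - (y - (P * (A - Ac)) *ᵥ x') j|
      = |((P * (A - Ac)) *ᵥ x' - (P * (A - Ac)) *ᵥ x) j| := by simp only [Pi.sub_apply]; ring_nf
    _ ≤ d * ((1 - r) * ρ j) := hM.trans (mul_le_mul_of_nonneg_left (hg j) hd)
    _ ≤ d * ρ j := mul_le_mul_of_nonneg_left (by nlinarith [hρ j]) hd

end InnerApproximation

theorem zonotope_inner_approx_of_omega_forall_exists_general
    {m n : ℕ} [Nonempty (Fin n)]
    (Ac Δ : Matrix (Fin m) (Fin n) ℝ)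
    (xl xu : Fin n → ℝ)
    (xc ρ μ : Fin n → ℝ)
    (hxc : ∀ j, xc j = (xl j + xu j) / 2)
    (hρ : ∀ j, ρ j = (xu j - xl j) / 2)
    (hρpos : ∀ j, 0 < ρ j)
    (hμ : ∀ j, μ j = max |xl j| |xu j|)
    (hrank : IsUnit (Ac * Ac.transpose).det)
    (Adag : Matrix (Fin n) (Fin m) ℝ)
    (hAdag : Adag = Ac.transpose * (Ac * Ac.transpose)⁻¹)
    (r : ℝ)
    (hr : r = Finset.univ.inf' Finset.univ_nonempty
      (fun j => (ρ j - (Adag.map (fun t => |t|)).mulVec (Δ.mulVec μ) j) / ρ j))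
    (hr0 : 0 ≤ r) :
    ∀ y : Fin n → ℝ, (∀ j, |y j - xc j| ≤ r * ρ j) →
      ∀ A : Matrix (Fin m) (Fin n) ℝ, (∀ i j, |A i j - Ac i j| ≤ Δ i j) →
        ∃ x : Fin n → ℝ, (∀ j, xl j ≤ x j ∧ x j ≤ xu j) ∧ A.mulVec x = Ac.mulVec y := by
  intro y hy A hA
  have hpinv : Ac * Adag = 1 := by rw [hAdag, ← Matrix.mul_assoc, mul_nonsing_inv _ hrank]
  have hg : ∀ j, (Adag.map (fun t => |t|) *ᵥ (Δ *ᵥ μ)) j ≤ (1 - r) * ρ j := fun j => by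
    have := (le_div_iff₀ (hρpos j)).1 (hr ▸ Finset.inf'_le _ (Finset.mem_univ j))
    linarith
  have hρμ : ∀ j, ρ j ≤ μ j := fun j => by
    linarith [hρ j, hμ j, le_abs_self (xu j), neg_abs_le (xl j), le_max_left |xl j| |xu j|,
      le_max_right |xl j| |xu j|]
  have hle : xl ≤ xu := fun j => by linarith [hρ j, hρpos j]
  obtain ⟨x, hx, hfix⟩ := exists_fixedPoint_of_dist_div_le hρpos hle
    (mapsTo_Icc_sub_mul_sub_mulVec hxc hρ hμ hA hg hy)
    (fun x _ x' _ => dist_sub_mul_sub_mulVec_div_le hρpos hρμ hr0 hA hg x x')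
  exact ⟨x, fun j => ⟨hx.1 j, hx.2 j⟩, mulVec_eq_of_eq_sub_mul_sub_mulVec hpinv hfix.symm⟩

/-- Zonotope inner approximation of `Ω_∀∃([A],[x])`: with
`r = min_j (ρ_j − (|A_c†| Δ μ)_j)/ρ_j`, if `r ≥ 0` then
`Ω_∀∃(A_c, [x_c − rρ, x_c + rρ]) ⊆ Ω_∀∃([A],[x])`. -/
theorem zonotope_inner_approx_of_omega_forall_exists
    {m n : ℕ} [Nonempty (Fin n)]
    (Ac Δ : Matrix (Fin m) (Fin n) ℝ) (hΔ : ∀ i j, 0 ≤ Δ i j)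
    (xl xu : Fin n → ℝ) (hx : ∀ j, xl j ≤ xu j)
    (xc ρ μ : Fin n → ℝ)
    (hxc : ∀ j, xc j = (xl j + xu j) / 2)
    (hρ : ∀ j, ρ j = (xu j - xl j) / 2)
    (hρpos : ∀ j, 0 < ρ j)
    (hμ : ∀ j, μ j = max |xl j| |xu j|)
    (hrank : IsUnit (Ac * Ac.transpose).det)
    (Adag : Matrix (Fin n) (Fin m) ℝ)
    (hAdag : Adag = Ac.transpose * (Ac * Ac.transpose)⁻¹)
    (r : ℝ)
    (hr : r = Finset.univ.inf' Finset.univ_nonempty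
      (fun j => (ρ j - (Adag.map (fun t => |t|)).mulVec (Δ.mulVec μ) j) / ρ j))
    (hr0 : 0 ≤ r) :
    ∀ y : Fin n → ℝ, (∀ j, |y j - xc j| ≤ r * ρ j) →
      ∀ A : Matrix (Fin m) (Fin n) ℝ, (∀ i j, |A i j - Ac i j| ≤ Δ i j) →
        ∃ x : Fin n → ℝ, (∀ j, xl j ≤ x j ∧ x j ≤ xu j) ∧ A.mulVec x = Ac.mulVec y :=
  zonotope_inner_approx_of_omega_forall_exists_general Ac Δ xl xu xc ρ μ hxc hρ hρpos hμ hrank Adag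
    hAdag r hr hr0
end

section
/- Let [A] be an interval m×n matrix with midpoint A_c and entrywise-nonnegative radius Δ, and let [b] = [b̲, b̄] be an interval vector in ℝ^m with midpoint b_c = (b̲+b̄)/2 and radius δ = (b̄−b̲)/2. Then a vector x ∈ ℝ^n belongs to the tolerance solution set Σ_∀∃([A],[b]) — i.e., b̲ ≤ A x ≤ b̄ for every matrix A with |A − A_c| ≤ Δ entrywise — if and only if |A_c x − b_c| ≤ −Δ|x| + δ componentwise, where |x| denotes the vector of absolute values of the components of x. -/
open Matrix Finset

lemma abs_sign_le_one' (t : ℝ) : |Real.sign t| ≤ 1 := by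
  rcases lt_trichotomy t 0 with h | h | h
  · simp [Real.sign_of_neg h]
  · simp [h]
  · simp [Real.sign_of_pos h]

lemma sign_mul_self' (t : ℝ) : Real.sign t * t = |t| := by
  rcases lt_trichotomy t 0 with h | h | h
  · rw [Real.sign_of_neg h, abs_of_neg h]; ring
  · simp [h]
  · rw [Real.sign_of_pos h, abs_of_pos h]; ring

/-- Rohn's characterization of the tolerance solution set:
`x ∈ Σ_∀∃([A],[b])` iff `|A_c x − b_c| ≤ −Δ|x| + δ` componentwise. -/
theorem mem_tolerance_solution_set_iff
    {m n : ℕ} (Ac Δ : Matrix (Fin m) (Fin n) ℝ) (hΔ : ∀ i j, 0 ≤ Δ i j)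
    (bl bu : Fin m → ℝ) (hb : ∀ i, bl i ≤ bu i)
    (bc δ : Fin m → ℝ)
    (hbc : ∀ i, bc i = (bl i + bu i) / 2)
    (hδ : ∀ i, δ i = (bu i - bl i) / 2)
    (x : Fin n → ℝ) :
    (∀ A : Matrix (Fin m) (Fin n) ℝ, (∀ i j, |A i j - Ac i j| ≤ Δ i j) →
        ∀ i, bl i ≤ A.mulVec x i ∧ A.mulVec x i ≤ bu i) ↔
    (∀ i, |Ac.mulVec x i - bc i| ≤ -(Δ.mulVec (fun j => |x j|) i) + δ i) := by
  constructor
  · intro H i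
    set Ap : Matrix (Fin m) (Fin n) ℝ := fun i j => Ac i j + Δ i j * Real.sign (x j) with hAp
    set Am : Matrix (Fin m) (Fin n) ℝ := fun i j => Ac i j - Δ i j * Real.sign (x j) with hAm
    have hbound : ∀ i j, |Δ i j * Real.sign (x j)| ≤ Δ i j := by
      intro i j
      rw [abs_mul, abs_of_nonneg (hΔ i j)]
      calc Δ i j * |Real.sign (x j)| ≤ Δ i j * 1 :=
            mul_le_mul_of_nonneg_left (abs_sign_le_one' _) (hΔ i j)
        _ = Δ i j := mul_one _
    have hAps : ∀ i, Ap.mulVec x i = Ac.mulVec x i + Δ.mulVec (fun j => |x j|) i := by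
      intro i
      simp only [mulVec, dotProduct, hAp]
      rw [← Finset.sum_add_distrib]
      congr 1; funext j
      rw [add_mul, mul_assoc, sign_mul_self']
    have hAms : ∀ i, Am.mulVec x i = Ac.mulVec x i - Δ.mulVec (fun j => |x j|) i := by
      intro i
      simp only [mulVec, dotProduct, hAm]
      rw [← Finset.sum_sub_distrib]
      congr 1; funext j
      rw [sub_mul, mul_assoc, sign_mul_self']
    have h1 := (H Ap (by intro i j; simpa [hAp] using hbound i j) i).2
    have h2 := (H Am (by intro i j; simpa [hAm] using hbound i j) i).1
    rw [hAps i] at h1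
    rw [hAms i] at h2
    rw [abs_le]
    constructor <;> [skip; skip] <;> (rw [hbc i, hδ i]; linarith)
  · intro H A hA i
    have hdiff : |A.mulVec x i - Ac.mulVec x i| ≤ Δ.mulVec (fun j => |x j|) i := by
      simp only [mulVec, dotProduct]
      rw [← Finset.sum_sub_distrib]
      calc |∑ j, (A i j * x j - Ac i j * x j)| ≤ ∑ j, |A i j * x j - Ac i j * x j| :=
            Finset.abs_sum_le_sum_abs _ _
        _ ≤ ∑ j, Δ i j * |x j| := by
            apply Finset.sum_le_sum
            intro j _
            rw [← sub_mul, abs_mul]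
            exact mul_le_mul_of_nonneg_right (hA i j) (abs_nonneg _)
    have h := H i
    rw [abs_le] at h hdiff
    rw [hbc i, hδ i] at h
    constructor <;> linarith
end

section
/- Let [A] be an interval m×n matrix with rows [a_i] = [a̲_i, ā_i], let [b] = [b̲, b̄] be an interval vector in ℝ^m with midpoint b_c = (b̲+b̄)/2 and radius δ = (b̄−b̲)/2, let x_c ∈ ℝ^n and r ≥ 0. Then the cube {x ∈ ℝ^n : ‖x − x_c‖_∞ ≤ r} is contained in the tolerance solution set Σ_∀∃([A],[b]) if and only if for every i ∈ {1,…,m} and every row vector a with a̲_i ≤ a ≤ ā_i componentwise, |a·x_c − (b_c)_i| + r‖a‖₁ ≤ δ_i, where ‖a‖₁ is the 1-norm of a. -/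
/-!
On the cube `‖x - xc‖_∞ ≤ r` the linear form `a ⬝ᵥ x` takes exactly the values within
`r‖a‖₁` of `a ⬝ᵥ xc`, the extremes being attained at `xc ± r • sign a`. The tolerance condition
`bl ≤ A x ≤ bu` says `|A i ⬝ᵥ x - bc i| ≤ δ i` row by row, and the rows of an interval matrix vary
independently, so the quantifier over `A ∈ [A]` splits into one quantifier per row.
-/

open Matrix Finset

section Cube

variable {ι : Type*} [Fintype ι]

theorem abs_dotProduct_sub_le_of_forall_abs_sub_le {r : ℝ} {a x xc : ι → ℝ}
    (hx : ∀ j, |x j - xc j| ≤ r) : |a ⬝ᵥ x - a ⬝ᵥ xc| ≤ r * ∑ j, |a j| := by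
  rw [← dotProduct_sub, mul_sum]
  refine (abs_sum_le_sum_abs _ _).trans (sum_le_sum fun j _ => ?_)
  rw [Pi.sub_apply, abs_mul, mul_comm r]
  exact mul_le_mul_of_nonneg_left (hx j) (abs_nonneg _)

theorem exists_forall_abs_sub_le_dotProduct_eq {r ε : ℝ} (hr : 0 ≤ r) (hε : |ε| ≤ 1)
    (a xc : ι → ℝ) :
    ∃ x : ι → ℝ, (∀ j, |x j - xc j| ≤ r) ∧ a ⬝ᵥ x = a ⬝ᵥ xc + ε * (r * ∑ j, |a j|) := by
  refine ⟨fun j => xc j + ε * r * SignType.sign (a j), fun j => ?_, ?_⟩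
  · have hsign : |(SignType.sign (a j) : ℝ)| ≤ 1 := by
      rcases lt_trichotomy (a j) 0 with h | h | h <;> simp [h]
    rw [add_sub_cancel_left, abs_mul, abs_mul, abs_of_nonneg hr]
    calc |ε| * r * |(SignType.sign (a j) : ℝ)| ≤ 1 * r * 1 := by gcongr
      _ = r := by ring
  · simp only [dotProduct, mul_add, sum_add_distrib, mul_sum]
    congr 1
    refine sum_congr rfl fun j _ => ?_
    rw [← self_mul_sign (a j)]
    ring

theorem forall_abs_sub_le_imp_abs_dotProduct_sub_le_iff {r c δ : ℝ} (hr : 0 ≤ r)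
    (a xc : ι → ℝ) :
    (∀ x : ι → ℝ, (∀ j, |x j - xc j| ≤ r) → |a ⬝ᵥ x - c| ≤ δ) ↔
      |a ⬝ᵥ xc - c| + r * ∑ j, |a j| ≤ δ := by
  constructor
  · intro h
    obtain ⟨xp, hxp, haxp⟩ := exists_forall_abs_sub_le_dotProduct_eq (ε := 1) hr (by norm_num) a xc
    obtain ⟨xm, hxm, haxm⟩ :=
      exists_forall_abs_sub_le_dotProduct_eq (ε := -1) hr (by norm_num) a xc
    have hp := abs_le.mp (h xp hxp)
    have hm := abs_le.mp (h xm hxm)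
    rw [haxp] at hp
    rw [haxm] at hm
    cases abs_cases (a ⬝ᵥ xc - c) <;> linarith
  · intro h x hx
    calc |a ⬝ᵥ x - c| ≤ |a ⬝ᵥ xc - c| + |a ⬝ᵥ x - a ⬝ᵥ xc| := by
          simpa using abs_add_le (a ⬝ᵥ xc - c) (a ⬝ᵥ x - a ⬝ᵥ xc)
      _ ≤ δ := by linarith [abs_dotProduct_sub_le_of_forall_abs_sub_le (a := a) hx]

end Cube

theorem abs_sub_midpoint_le_iff {l u y : ℝ} :
    |y - (l + u) / 2| ≤ (u - l) / 2 ↔ l ≤ y ∧ y ≤ u := by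
  rw [abs_le]
  constructor <;> rintro ⟨h₁, h₂⟩ <;> constructor <;> linarith

theorem forall_interval_matrix_iff_forall_row {m n α : Type*} [DecidableEq m] [Preorder α]
    {Al Au : Matrix m n α}
    (hA : ∀ i j, Al i j ≤ Au i j) (P : m → (n → α) → Prop) :
    (∀ A : Matrix m n α, (∀ i j, Al i j ≤ A i j ∧ A i j ≤ Au i j) → ∀ i, P i (A i)) ↔
      ∀ i, ∀ a : n → α, (∀ j, Al i j ≤ a j ∧ a j ≤ Au i j) → P i a := by
  refine ⟨fun h i a ha => ?_, fun h A hA' i => h i (A i) (hA' i)⟩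
  have hadm : ∀ k j, Al k j ≤ Al.updateRow i a k j ∧ Al.updateRow i a k j ≤ Au k j := by
    intro k j
    rcases eq_or_ne k i with rfl | hk
    · simpa using ha j
    · simpa [hk] using hA k j
  simpa using h (Al.updateRow i a) hadm i

theorem cube_subset_tolerance_iff_general
    {m n : ℕ} (Al Au : Matrix (Fin m) (Fin n) ℝ) (hA : ∀ i j, Al i j ≤ Au i j)
    (bl bu : Fin m → ℝ)
    (bc δ : Fin m → ℝ)
    (hbc : ∀ i, bc i = (bl i + bu i) / 2)
    (hδ : ∀ i, δ i = (bu i - bl i) / 2)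
    (xc : Fin n → ℝ) (r : ℝ) (hr : 0 ≤ r) :
    {x : Fin n → ℝ | ∀ j, |x j - xc j| ≤ r} ⊆
      {x | ∀ A : Matrix (Fin m) (Fin n) ℝ,
        (∀ i j, Al i j ≤ A i j ∧ A i j ≤ Au i j) →
        ∀ i, bl i ≤ A.mulVec x i ∧ A.mulVec x i ≤ bu i} ↔
    (∀ i, ∀ a : Fin n → ℝ, (∀ j, Al i j ≤ a j ∧ a j ≤ Au i j) →
        |a ⬝ᵥ xc - bc i| + r * ∑ j, |a j| ≤ δ i) := by
  have hmid (i) (y : ℝ) : (bl i ≤ y ∧ y ≤ bu i) ↔ |y - bc i| ≤ δ i := by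
    rw [hbc, hδ, abs_sub_midpoint_le_iff]
  calc _ ↔ ∀ A : Matrix (Fin m) (Fin n) ℝ, (∀ i j, Al i j ≤ A i j ∧ A i j ≤ Au i j) →
        ∀ i, ∀ x : Fin n → ℝ, (∀ j, |x j - xc j| ≤ r) → |A i ⬝ᵥ x - bc i| ≤ δ i := by
        simp only [Set.subset_def, Set.mem_ofPred_eq, mulVec, hmid]
        exact ⟨fun h A hA i x hx => h x hx A hA i, fun h x hx A hA i => h A hA i x hx⟩
    _ ↔ _ := forall_interval_matrix_iff_forall_row hA fun i a =>
        ∀ x : Fin n → ℝ, (∀ j, |x j - xc j| ≤ r) → |a ⬝ᵥ x - bc i| ≤ δ i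
    _ ↔ _ := forall_congr' fun i => forall₂_congr fun a _ =>
        forall_abs_sub_le_imp_abs_dotProduct_sub_le_iff hr a xc

/-- The sup-norm cube of radius `r` centered at `x_c` is contained in the
tolerance solution set `Σ_∀∃([A],[b])` iff for every row index `i` and every row
`a ∈ [a̲_i, ā_i]`, `|a·x_c − (b_c)_i| + r‖a‖₁ ≤ δ_i`. -/
theorem cube_subset_tolerance_iff
    {m n : ℕ} (Al Au : Matrix (Fin m) (Fin n) ℝ) (hA : ∀ i j, Al i j ≤ Au i j)
    (bl bu : Fin m → ℝ) (hb : ∀ i, bl i ≤ bu i)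
    (bc δ : Fin m → ℝ)
    (hbc : ∀ i, bc i = (bl i + bu i) / 2)
    (hδ : ∀ i, δ i = (bu i - bl i) / 2)
    (xc : Fin n → ℝ) (r : ℝ) (hr : 0 ≤ r) :
    {x : Fin n → ℝ | ∀ j, |x j - xc j| ≤ r} ⊆
      {x | ∀ A : Matrix (Fin m) (Fin n) ℝ,
        (∀ i j, Al i j ≤ A i j ∧ A i j ≤ Au i j) →
        ∀ i, bl i ≤ A.mulVec x i ∧ A.mulVec x i ≤ bu i} ↔
    (∀ i, ∀ a : Fin n → ℝ, (∀ j, Al i j ≤ a j ∧ a j ≤ Au i j) →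
        |a ⬝ᵥ xc - bc i| + r * ∑ j, |a j| ≤ δ i) :=
  cube_subset_tolerance_iff_general Al Au hA bl bu bc δ hbc hδ xc r hr
end

section
/- Let [A] be an interval m×n matrix with entrywise bounds A̲ ≤ A ≤ Ā, let [b] = [b̲, b̄] be an interval vector in ℝ^m, let x_c ∈ ℝ^n and r ≥ 0. Then the cube {x ∈ ℝ^n : ‖x − x_c‖_∞ ≤ r} is contained in the tolerance solution set Σ_∀∃([A],[b]) if and only if there exist real numbers y_{ij} and z_{ij} (1 ≤ i ≤ m, 1 ≤ j ≤ n) such that for every i: Σ_j y_{ij} ≤ b̄_i and Σ_j z_{ij} ≥ b̲_i, and for every i, j: y_{ij} is at least each of the four products Ā_{ij}((x_c)_j + r), Ā_{ij}((x_c)_j − r), A̲_{ij}((x_c)_j + r), A̲_{ij}((x_c)_j − r), and z_{ij} is at most each of those same four products. -/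
/-!
Row `i` of `A x` is `∑ j, A i j * x j`, where the `A i j` and `x j` range independently over
intervals. Since `a * t` is bilinear, its extrema over a rectangle are attained at corners, so
`y i j` dominates every `A i j * x j` as soon as it dominates the four corner products. Conversely,
taking in row `i` the maximising corner of every term yields a matrix in the box and a vertex of
the cube at which row `i` equals `∑ j` of the corner maxima; the vertex may depend on `i` because
containment is tested one row at a time.
-/

open Matrix Finset

section CornerExtrema

variable {R : Type*} [Mul R] [LinearOrder R] (a₁ a₂ t₁ t₂ : R)

theorem exists_corner_forall_corner_mul_le :
    ∃ p ∈ ({a₁, a₂} : Finset R), ∃ q ∈ ({t₁, t₂} : Finset R),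
      a₂ * t₂ ≤ p * q ∧ a₂ * t₁ ≤ p * q ∧ a₁ * t₂ ≤ p * q ∧ a₁ * t₁ ≤ p * q := by
  obtain ⟨⟨p, q⟩, hpq, hmax⟩ :=
    (({a₁, a₂} : Finset R) ×ˢ ({t₁, t₂} : Finset R)).exists_max_image (fun c => c.1 * c.2)
      (by simp)
  rw [mem_product] at hpq
  exact ⟨p, hpq.1, q, hpq.2, hmax (a₂, t₂) (by simp), hmax (a₂, t₁) (by simp),
    hmax (a₁, t₂) (by simp), hmax (a₁, t₁) (by simp)⟩

theorem exists_corner_forall_le_corner_mul :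
    ∃ p ∈ ({a₁, a₂} : Finset R), ∃ q ∈ ({t₁, t₂} : Finset R),
      p * q ≤ a₂ * t₂ ∧ p * q ≤ a₂ * t₁ ∧ p * q ≤ a₁ * t₂ ∧ p * q ≤ a₁ * t₁ := by
  obtain ⟨⟨p, q⟩, hpq, hmin⟩ :=
    (({a₁, a₂} : Finset R) ×ˢ ({t₁, t₂} : Finset R)).exists_min_image (fun c => c.1 * c.2)
      (by simp)
  rw [mem_product] at hpq
  exact ⟨p, hpq.1, q, hpq.2, hmin (a₂, t₂) (by simp), hmin (a₂, t₁) (by simp),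
    hmin (a₁, t₂) (by simp), hmin (a₁, t₁) (by simp)⟩

end CornerExtrema

section CornerBounds

variable {R : Type*} [CommRing R] [LinearOrder R] [IsStrictOrderedRing R]
  {a a₁ a₂ t t₁ t₂ y z : R}

theorem mul_le_of_corners_le (ha₁ : a₁ ≤ a) (ha₂ : a ≤ a₂) (ht₁ : t₁ ≤ t) (ht₂ : t ≤ t₂)
    (hy : a₂ * t₂ ≤ y ∧ a₂ * t₁ ≤ y ∧ a₁ * t₂ ≤ y ∧ a₁ * t₁ ≤ y) : a * t ≤ y := by
  obtain ⟨h₂₂, h₂₁, h₁₂, h₁₁⟩ := hy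
  rcases le_total 0 t with ht | ht
  · rcases le_total 0 a₂ with ha | ha <;> nlinarith
  · rcases le_total 0 a₁ with ha | ha <;> nlinarith

theorem le_mul_of_le_corners (ha₁ : a₁ ≤ a) (ha₂ : a ≤ a₂) (ht₁ : t₁ ≤ t) (ht₂ : t ≤ t₂)
    (hz : z ≤ a₂ * t₂ ∧ z ≤ a₂ * t₁ ∧ z ≤ a₁ * t₂ ∧ z ≤ a₁ * t₁) : z ≤ a * t := by
  obtain ⟨h₂₂, h₂₁, h₁₂, h₁₁⟩ := hz
  rcases le_total 0 t with ht | ht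
  · rcases le_total 0 a₁ with ha | ha <;> nlinarith
  · rcases le_total 0 a₂ with ha | ha <;> nlinarith

end CornerBounds

theorem mem_Icc_of_mem_pair {α : Type*} [Preorder α] [DecidableEq α] {p a₁ a₂ : α}
    (h : a₁ ≤ a₂) (hp : p ∈ ({a₁, a₂} : Finset α)) :
    p ∈ Set.Icc a₁ a₂ := by
  obtain rfl | rfl := by simpa using hp
  exacts [⟨le_rfl, h⟩, ⟨h, le_rfl⟩]

theorem abs_sub_le_iff_mem_Icc {α : Type*} [AddCommGroup α] [LinearOrder α]
    [IsOrderedAddMonoid α] {x c r : α} : |x - c| ≤ r ↔ x ∈ Set.Icc (c - r) (c + r) := by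
  rw [abs_sub_comm, Set.mem_Icc_iff_abs_le]

/-- Linear-programming characterization (variable-center n-cube): the
sup-norm cube of radius `r` centered at `x_c` is contained in the tolerance solution
set `Σ_∀∃([A],[b])` iff there exist auxiliary variables `y i j`, `z i j` satisfying
the stated linear constraints. -/
theorem cube_subset_tolerance_iff_lp
    {m n : ℕ} (Al Au : Matrix (Fin m) (Fin n) ℝ) (hA : ∀ i j, Al i j ≤ Au i j)
    (bl bu : Fin m → ℝ)
    (xc : Fin n → ℝ) (r : ℝ) (hr : 0 ≤ r) :
    {x : Fin n → ℝ | ∀ j, |x j - xc j| ≤ r} ⊆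
      {x | ∀ A : Matrix (Fin m) (Fin n) ℝ,
        (∀ i j, Al i j ≤ A i j ∧ A i j ≤ Au i j) →
        ∀ i, bl i ≤ A.mulVec x i ∧ A.mulVec x i ≤ bu i} ↔
    (∃ y z : Fin m → Fin n → ℝ,
      (∀ i, (∑ j, y i j) ≤ bu i) ∧
      (∀ i, bl i ≤ ∑ j, z i j) ∧
      (∀ i j, Au i j * (xc j + r) ≤ y i j ∧ Au i j * (xc j - r) ≤ y i j ∧
              Al i j * (xc j + r) ≤ y i j ∧ Al i j * (xc j - r) ≤ y i j) ∧
      (∀ i j, z i j ≤ Au i j * (xc j + r) ∧ z i j ≤ Au i j * (xc j - r) ∧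
              z i j ≤ Al i j * (xc j + r) ∧ z i j ≤ Al i j * (xc j - r))) := by
  constructor
  · intro hsub
    choose P hP Q hQ hmax using fun i j =>
      exists_corner_forall_corner_mul_le (Al i j) (Au i j) (xc j - r) (xc j + r)
    choose p hp q hq hmin using fun i j =>
      exists_corner_forall_le_corner_mul (Al i j) (Au i j) (xc j - r) (xc j + r)
    have hcube : ∀ s : Fin m → Fin n → ℝ, (∀ i j, s i j ∈ ({xc j - r, xc j + r} : Finset ℝ)) →
        ∀ i, (fun j => s i j) ∈ {x : Fin n → ℝ | ∀ j, |x j - xc j| ≤ r} := fun s hs i j =>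
      abs_sub_le_iff_mem_Icc.2 (mem_Icc_of_mem_pair (by linarith) (hs i j))
    have hbox : ∀ B : Matrix (Fin m) (Fin n) ℝ, (∀ i j, B i j ∈ ({Al i j, Au i j} : Finset ℝ)) →
        ∀ i j, Al i j ≤ B i j ∧ B i j ≤ Au i j := fun B hB i j =>
      mem_Icc_of_mem_pair (hA i j) (hB i j)
    -- `(P *ᵥ Q i) i` unfolds to the witness sum `∑ j, P i j * Q i j`.
    refine ⟨fun i j => P i j * Q i j, fun i j => p i j * q i j,
      fun i => ?_, fun i => ?_, hmax, hmin⟩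
    · exact (hsub (hcube Q hQ i) P (hbox P hP) i).2
    · exact (hsub (hcube q hq i) p (hbox p hp) i).1
  · rintro ⟨y, z, hy, hz, hyc, hzc⟩ x hx A hAb i
    have hxc : ∀ j, x j ∈ Set.Icc (xc j - r) (xc j + r) := fun j =>
      abs_sub_le_iff_mem_Icc.1 (hx j)
    constructor
    · refine (hz i).trans (sum_le_sum fun j _ => ?_)
      exact le_mul_of_le_corners (hAb i j).1 (hAb i j).2 (hxc j).1 (hxc j).2 (hzc i j)
    · refine (sum_le_sum fun j _ => ?_).trans (hy i)
      exact mul_le_of_corners_le (hAb i j).1 (hAb i j).2 (hxc j).1 (hxc j).2 (hyc i j)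
end

section
/- Let [A] be an interval m×n matrix with rows [a_i] = [a̲_i, ā_i], let [b] = [b̲, b̄] be an interval vector in ℝ^m, let x_c ∈ ℝ^n and r ≥ 0. Then the Euclidean ball {x ∈ ℝ^n : ‖x − x_c‖₂ ≤ r} is contained in the tolerance solution set Σ_∀∃([A],[b]) if and only if for every i ∈ {1,…,m} and every row vector a with a̲_i ≤ a ≤ ā_i componentwise, both a·x_c + r‖a‖₂ ≤ b̄_i and a·x_c − r‖a‖₂ ≥ b̲_i hold, where ‖a‖₂ is the Euclidean norm of a. -/
open Matrix Finset

lemma cs_dot {n : ℕ} (a y : Fin n → ℝ) (r : ℝ)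
    (hy : Real.sqrt (∑ j, (y j) ^ 2) ≤ r) :
    a ⬝ᵥ y ≤ r * Real.sqrt (∑ j, (a j) ^ 2) := by
  have h := Real.sum_mul_le_sqrt_mul_sqrt Finset.univ a y
  have hN : (0:ℝ) ≤ Real.sqrt (∑ j, (a j) ^ 2) := Real.sqrt_nonneg _
  calc a ⬝ᵥ y = ∑ j, a j * y j := rfl
    _ ≤ Real.sqrt (∑ j, (a j) ^ 2) * Real.sqrt (∑ j, (y j) ^ 2) := h
    _ ≤ Real.sqrt (∑ j, (a j) ^ 2) * r := by exact mul_le_mul_of_nonneg_left hy hN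
    _ = r * Real.sqrt (∑ j, (a j) ^ 2) := mul_comm _ _

/-- The Euclidean ball of radius `r` centered at `x_c` is contained in the
tolerance solution set `Σ_∀∃([A],[b])` iff for every row index `i` and every row
`a ∈ [a̲_i, ā_i]`, both `a·x_c + r‖a‖₂ ≤ b̄_i` and `a·x_c − r‖a‖₂ ≥ b̲_i`. -/
theorem ball_subset_tolerance_iff
    {m n : ℕ} (Al Au : Matrix (Fin m) (Fin n) ℝ) (hA : ∀ i j, Al i j ≤ Au i j)
    (bl bu : Fin m → ℝ)
    (xc : Fin n → ℝ) (r : ℝ) (hr : 0 ≤ r) :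
    {x : Fin n → ℝ | Real.sqrt (∑ j, (x j - xc j) ^ 2) ≤ r} ⊆
      {x | ∀ A : Matrix (Fin m) (Fin n) ℝ,
        (∀ i j, Al i j ≤ A i j ∧ A i j ≤ Au i j) →
        ∀ i, bl i ≤ A.mulVec x i ∧ A.mulVec x i ≤ bu i} ↔
    (∀ i, ∀ a : Fin n → ℝ, (∀ j, Al i j ≤ a j ∧ a j ≤ Au i j) →
        a ⬝ᵥ xc + r * Real.sqrt (∑ j, (a j) ^ 2) ≤ bu i ∧
        bl i ≤ a ⬝ᵥ xc - r * Real.sqrt (∑ j, (a j) ^ 2)) := by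
  constructor
  · intro hsub i a ha
    set N := Real.sqrt (∑ j, (a j) ^ 2) with hNdef
    set A : Matrix (Fin m) (Fin n) ℝ := fun i' j => if i' = i then a j else Al i' j with hAdef
    have hAbound : ∀ i' j, Al i' j ≤ A i' j ∧ A i' j ≤ Au i' j := by
      intro i' j
      simp only [hAdef]
      by_cases h : i' = i
      · subst h; simp [ha j]
      · simp [h, hA i' j]
    have hAi : ∀ x, A.mulVec x i = a ⬝ᵥ x := by
      intro x; simp [Matrix.mulVec, hAdef]
    have hSnn : (0:ℝ) ≤ ∑ j, (a j) ^ 2 := Finset.sum_nonneg fun j _ => sq_nonneg _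
    by_cases hN0 : N = 0
    ·
      have hxc : xc ∈ {x : Fin n → ℝ | Real.sqrt (∑ j, (x j - xc j) ^ 2) ≤ r} := by
        simp [Set.mem_setOf_eq, hr]
      have := hsub hxc A hAbound i
      rw [hAi] at this
      rw [hN0]
      constructor <;> [(simpa using this.2); (simpa using this.1)]
    · have hNpos : 0 < N := lt_of_le_of_ne (Real.sqrt_nonneg _) (Ne.symm hN0)
      have hN2 : N ^ 2 = ∑ j, (a j) ^ 2 := Real.sq_sqrt hSnn
      -- upper
      have key : ∀ (s : ℝ), s = 1 ∨ s = -1 →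
          a ⬝ᵥ xc + s * (r * N) = A.mulVec (fun j => xc j + s * (r / N) * a j) i := by
        intro s hs
        rw [hAi]
        have : a ⬝ᵥ (fun j => xc j + s * (r / N) * a j)
            = a ⬝ᵥ xc + s * (r / N) * ∑ j, (a j)^2 := by
          simp only [dotProduct, mul_add, Finset.sum_add_distrib, Finset.mul_sum]
          congr 1
          apply Finset.sum_congr rfl; intro j _; ring
        rw [this, ← hN2]
        field_simp
      have hmem : ∀ (s : ℝ), s = 1 ∨ s = -1 →
          (fun j => xc j + s * (r / N) * a j) ∈
            {x : Fin n → ℝ | Real.sqrt (∑ j, (x j - xc j) ^ 2) ≤ r} := by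
        intro s hs
        have hs2 : s ^ 2 = 1 := by rcases hs with h | h <;> simp [h]
        have : ∑ j, ((xc j + s * (r / N) * a j) - xc j) ^ 2
            = (r / N)^2 * ∑ j, (a j)^2 := by
          rw [Finset.mul_sum]
          apply Finset.sum_congr rfl; intro j _
          have : (xc j + s * (r / N) * a j) - xc j = s * ((r / N) * a j) := by ring
          rw [this, mul_pow, hs2, one_mul, mul_pow]
        simp only [Set.mem_setOf_eq, this, ← hN2]
        rw [show (r / N)^2 * N^2 = (r/N*N)^2 by ring, Real.sqrt_sq (by positivity)]
        rw [div_mul_cancel₀ _ (ne_of_gt hNpos)]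
      constructor
      · have h1 := hsub (hmem 1 (Or.inl rfl)) A hAbound i
        have := key 1 (Or.inl rfl)
        rw [one_mul] at this
        rw [this]
        exact h1.2
      · have h1 := hsub (hmem (-1) (Or.inr rfl)) A hAbound i
        have hk := key (-1) (Or.inr rfl)
        have : a ⬝ᵥ xc - r * N = A.mulVec (fun j => xc j + (-1) * (r / N) * a j) i := by
          rw [← hk]; ring
        rw [← this] at h1
        exact h1.1
  · intro hcond x hx A hAb i
    have ha : ∀ j, Al i j ≤ A i j ∧ A i j ≤ Au i j := hAb i
    obtain ⟨h1, h2⟩ := hcond i (A i) ha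
    have hdot : A.mulVec x i = A i ⬝ᵥ xc + A i ⬝ᵥ (fun j => x j - xc j) := by
      simp only [Matrix.mulVec, dotProduct, ← Finset.sum_add_distrib]
      apply Finset.sum_congr rfl; intro j _; ring
    have hub := cs_dot (A i) (fun j => x j - xc j) r hx
    have hlb := cs_dot (fun j => -(A i j)) (fun j => x j - xc j) r hx
    have hlb' : -(r * Real.sqrt (∑ j, (A i j) ^ 2)) ≤ A i ⬝ᵥ (fun j => x j - xc j) := by
      have heq : ∑ j, (-(A i j)) ^ 2 = ∑ j, (A i j) ^ 2 := by
        apply Finset.sum_congr rfl; intro j _; ring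
      have : (fun j => -(A i j)) ⬝ᵥ (fun j => x j - xc j)
          = -(A i ⬝ᵥ (fun j => x j - xc j)) := by
        simp [dotProduct, Finset.sum_neg_distrib]
      rw [this, heq] at hlb
      linarith
    constructor
    · rw [hdot]; linarith
    · rw [hdot]; linarith
end

section
/- Fix x ∈ ℝ^n and b ∈ ℝ. Let s ⊆ ℝ^n be a convex set such that every a ∈ s satisfies a ≠ 0 and a·x + b ≥ 0. Then the function f(a) = (a·x + b)/‖a‖₂ is quasiconcave on s; that is, for every β ∈ ℝ the superlevel set {a ∈ s : f(a) ≥ β} is convex. -/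
/-!
For `β ≤ 0` the superlevel set is all of `s`, since the numerator is nonnegative. For `β > 0`,
clearing the positive denominator turns `β ≤ (a·x + b) / ‖a‖₂` into `0 ≤ a·x + b - β ‖a‖₂`,
the superlevel set of an affine function minus a convex one, hence of a concave function.
-/

open Matrix Finset

theorem ConcaveOn.quasiconcaveOn_div {𝕜 E : Type*} [Field 𝕜] [LinearOrder 𝕜] [IsStrictOrderedRing 𝕜]
    [AddCommMonoid E] [Module 𝕜 E] {s : Set E} {f g : E → 𝕜}
    (hf : ConcaveOn 𝕜 s f) (hg : ConvexOn 𝕜 s g)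
    (hf₀ : ∀ a ∈ s, 0 ≤ f a) (hg₀ : ∀ a ∈ s, 0 < g a) :
    QuasiconcaveOn 𝕜 s fun a => f a / g a := by
  intro r
  rcases le_or_gt r 0 with hr | hr
  · convert hf.1 using 1
    ext a
    exact and_iff_left_of_imp fun ha => hr.trans (div_nonneg (hf₀ a ha) (hg₀ a ha).le)
  · convert (hf.sub (hg.smul hr.le)).convex_ge 0 using 1
    ext a
    simp only [Set.mem_ofPred_eq, Pi.sub_apply, smul_eq_mul, sub_nonneg]
    exact and_congr_right fun ha => le_div_iff₀ (hg₀ a ha)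

theorem Real.sqrt_sum_sq_eq_norm_toLp {ι : Type*} [Fintype ι] (a : ι → ℝ) :
    √(∑ j, a j ^ 2) = ‖WithLp.toLp 2 a‖ := by
  simp [EuclideanSpace.norm_eq]

theorem convexOn_sqrt_sum_sq {ι : Type*} [Fintype ι] {s : Set (ι → ℝ)} (hs : Convex ℝ s) :
    ConvexOn ℝ s fun a => √(∑ j, a j ^ 2) := by
  simp only [Real.sqrt_sum_sq_eq_norm_toLp]
  exact ((convexOn_norm convex_univ).comp_linearMap
    (WithLp.linearEquiv 2 ℝ (ι → ℝ)).symm.toLinearMap).subset (Set.subset_univ s) hs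

theorem Real.sqrt_sum_sq_pos {ι : Type*} [Fintype ι] {a : ι → ℝ} (ha : a ≠ 0) :
    0 < √(∑ j, a j ^ 2) := by
  rw [Real.sqrt_sum_sq_eq_norm_toLp, norm_pos_iff]
  simpa using ha

theorem concaveOn_dotProduct_add {ι : Type*} [Fintype ι] (x : ι → ℝ) (b : ℝ)
    {s : Set (ι → ℝ)} (hs : Convex ℝ s) : ConcaveOn ℝ s fun a => a ⬝ᵥ x + b :=
  (((dotProductBilin ℝ ℝ).flip x).concaveOn hs).add (concaveOn_const b hs)

/-- The function `f(a) = (a·x + b)/‖a‖₂` is quasiconcave on a convex set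
`s` on which every `a` satisfies `a ≠ 0` and `a·x + b ≥ 0`: every superlevel set is
convex. -/
theorem quasiconcave_dot_add_div_norm
    {n : ℕ} (x : Fin n → ℝ) (b : ℝ) (s : Set (Fin n → ℝ))
    (hs : Convex ℝ s)
    (hdom : ∀ a ∈ s, a ≠ 0 ∧ 0 ≤ a ⬝ᵥ x + b) :
    ∀ β : ℝ, Convex ℝ {a ∈ s | β ≤ (a ⬝ᵥ x + b) / Real.sqrt (∑ j, (a j) ^ 2)} :=
  (concaveOn_dotProduct_add x b hs).quasiconcaveOn_div (convexOn_sqrt_sum_sq hs)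
    (fun a ha => (hdom a ha).2) fun a ha => Real.sqrt_sum_sq_pos (hdom a ha).1
end

section
/- Fix x ∈ ℝ^n and c ∈ ℝ. Let B = {a ∈ ℝ^n : a̲ ≤ a ≤ ā componentwise} be a nonempty box with 0 ∉ B, and suppose c − a·x ≥ 0 for every a ∈ B. Then the minimum of f(a) = (c − a·x)/‖a‖₂ over B is attained at a vertex of B, i.e., there exists a ∈ B with a_j ∈ {a̲_j, ā_j} for every j such that f(a) ≤ f(a') for all a' ∈ B. -/
open Matrix Finset

private lemma sqrt_conv (C l u θ σ : ℝ) (hC : 0 ≤ C) (hθ : 0 ≤ θ) (hσ : 0 ≤ σ) (h1 : θ + σ = 1) :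
    Real.sqrt (C + (θ*l + σ*u)^2) ≤ θ * Real.sqrt (C + l^2) + σ * Real.sqrt (C + u^2) := by
  set s := Real.sqrt (C + l^2) with hs
  set t := Real.sqrt (C + u^2) with ht
  have hs0 : 0 ≤ s := Real.sqrt_nonneg _
  have ht0 : 0 ≤ t := Real.sqrt_nonneg _
  have hs2 : s^2 = C + l^2 := Real.sq_sqrt (by positivity)
  have ht2 : t^2 = C + u^2 := Real.sq_sqrt (by positivity)
  have hst : C + l*u ≤ s*t := by
    nlinarith [sq_nonneg (s*t - (C + l*u)), sq_nonneg (s*t + (C + l*u)), mul_nonneg hs0 ht0, sq_nonneg (l-u)]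
  have key := mul_le_mul_of_nonneg_left hst (by positivity : (0:ℝ) ≤ 2*θ*σ)
  have e1 : θ^2 * s^2 = θ^2*(C + l^2) := by rw [hs2]
  have e2 : σ^2 * t^2 = σ^2*(C + u^2) := by rw [ht2]
  have hC1 : θ^2*C + 2*(θ*σ*C) + σ^2*C = C := by linear_combination C*(θ+σ+1)*h1
  have : C + (θ*l + σ*u)^2 ≤ (θ*s + σ*t)^2 := by nlinarith [key, e1, e2, hC1]
  calc Real.sqrt (C + (θ*l + σ*u)^2) ≤ Real.sqrt ((θ*s + σ*t)^2) := Real.sqrt_le_sqrt this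
    _ = θ*s + σ*t := Real.sqrt_sq (by positivity)

section aux
variable {n : ℕ} (x : Fin n → ℝ) (c : ℝ) (al au : Fin n → ℝ)

private def boxP (al au : Fin n → ℝ) (a : Fin n → ℝ) : Prop := ∀ j, al j ≤ a j ∧ a j ≤ au j

private noncomputable def fval (x : Fin n → ℝ) (c : ℝ) (a : Fin n → ℝ) : ℝ :=
  (c - a ⬝ᵥ x) / Real.sqrt (∑ j, (a j) ^ 2)

private lemma den_pos
    (h0 : (0 : Fin n → ℝ) ∉ {a : Fin n → ℝ | ∀ j, al j ≤ a j ∧ a j ≤ au j})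
    {b : Fin n → ℝ} (hb : boxP al au b) : 0 < Real.sqrt (∑ j, (b j) ^ 2) := by
  simp only [Set.mem_setOf_eq, not_forall] at h0
  obtain ⟨j, hj⟩ := h0
  have hbj : b j ≠ 0 := by
    intro h
    exact hj ⟨by simpa [h] using (hb j).1, by simpa [h] using (hb j).2⟩
  apply Real.sqrt_pos.mpr
  apply Finset.sum_pos' (fun i _ => sq_nonneg _) ⟨j, Finset.mem_univ j, by positivity⟩

private lemma upd_sum (a : Fin n → ℝ) (i : Fin n) (F : Fin n → ℝ → ℝ) (t : ℝ) :
    ∑ j, F j (Function.update a i t j) = (∑ j ∈ Finset.univ.erase i, F j (a j)) + F i t := by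
  rw [← Finset.sum_erase_add _ _ (Finset.mem_univ i)]
  congr 1
  · exact Finset.sum_congr rfl (fun j hj => by rw [Function.update_of_ne (Finset.ne_of_mem_erase hj)])
  · rw [Function.update_self]

private lemma step
    (hbox : ∀ j, al j ≤ au j)
    (h0 : (0 : Fin n → ℝ) ∉ {a : Fin n → ℝ | ∀ j, al j ≤ a j ∧ a j ≤ au j})
    (hc : ∀ a : Fin n → ℝ, (∀ j, al j ≤ a j ∧ a j ≤ au j) → 0 ≤ c - a ⬝ᵥ x)
    (i : Fin n) (a : Fin n → ℝ) (ha : boxP al au a) :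
    ∃ b, boxP al au b ∧ (∀ j, j ≠ i → b j = a j) ∧ (b i = al i ∨ b i = au i) ∧
      fval x c b ≤ fval x c a := by
  set l := al i with hl
  set u := au i with hu
  rcases eq_or_lt_of_le (hbox i) with hdeg | hlt
  · -- degenerate interval : a i = al i already
    refine ⟨a, ha, fun j _ => rfl, Or.inl ?_, le_refl _⟩
    have h1 := (ha i).1
    have h2 := (ha i).2
    linarith [hdeg]
  · set t₀ := a i with ht₀
    set C := ∑ j ∈ Finset.univ.erase i, (a j)^2 with hC
    set D := ∑ j ∈ Finset.univ.erase i, a j * x j with hD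
    have hCnn : 0 ≤ C := Finset.sum_nonneg (fun j _ => sq_nonneg _)
    have hupdbox : ∀ t, l ≤ t → t ≤ u → boxP al au (Function.update a i t) := by
      intro t h1 h2 j
      rcases eq_or_ne j i with rfl | hne
      · simpa using ⟨h1, h2⟩
      · rw [Function.update_of_ne hne]; exact ha j
    have hsum : ∀ t, ∑ j, (Function.update a i t j)^2 = C + t^2 :=
      fun t => upd_sum a i (fun _ v => v^2) t
    have hdot : ∀ t, (Function.update a i t) ⬝ᵥ x = D + t * x i :=
      fun t => upd_sum a i (fun j v => v * x j) t
    have hfval : ∀ t, fval x c (Function.update a i t) =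
        (c - D - t * x i) / Real.sqrt (C + t^2) := by
      intro t
      rw [fval, hsum, hdot]; ring_nf
    have haself : Function.update a i t₀ = a := Function.update_eq_self i a
    have hfa : fval x c a = (c - D - t₀ * x i) / Real.sqrt (C + t₀^2) := by
      rw [← haself, hfval]
    set bl := Function.update a i l with hbl
    set bu := Function.update a i u with hbu
    have hblbox : boxP al au bl := hupdbox l le_rfl (hbox i)
    have hbubox : boxP al au bu := hupdbox u (hbox i) le_rfl
    set m := min (fval x c bl) (fval x c bu) with hm
    have hmnn : 0 ≤ m := by
      apply le_min
      · exact div_nonneg (hc bl hblbox) (Real.sqrt_nonneg _)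
      · exact div_nonneg (hc bu hbubox) (Real.sqrt_nonneg _)
    have hSl : 0 < Real.sqrt (C + l^2) := by
      have := den_pos al au h0 hblbox
      rwa [hsum l] at this
    have hSu : 0 < Real.sqrt (C + u^2) := by
      have := den_pos al au h0 hbubox
      rwa [hsum u] at this
    have hS0 : 0 < Real.sqrt (C + t₀^2) := by
      have := den_pos al au h0 ha
      rwa [show (∑ j, (a j)^2) = C + t₀^2 by rw [← hsum t₀, haself]] at this
    have hml : m * Real.sqrt (C + l^2) ≤ c - D - l * x i := by
      have : m ≤ fval x c bl := min_le_left _ _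
      rw [hfval l] at this
      exact (le_div_iff₀ hSl).mp this
    have hmu : m * Real.sqrt (C + u^2) ≤ c - D - u * x i := by
      have : m ≤ fval x c bu := min_le_right _ _
      rw [hfval u] at this
      exact (le_div_iff₀ hSu).mp this
    -- convex combination
    set θ := (u - t₀) / (u - l) with hθdef
    set σ := (t₀ - l) / (u - l) with hσdef
    have hul : 0 < u - l := by linarith
    have hθ : 0 ≤ θ := div_nonneg (by linarith [(ha i).2]) hul.le
    have hσ : 0 ≤ σ := div_nonneg (by linarith [(ha i).1]) hul.le
    have h1 : θ + σ = 1 := by rw [hθdef, hσdef]; field_simp; ring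
    have hcomb : θ * l + σ * u = t₀ := by rw [hθdef, hσdef]; field_simp; ring
    have hconv := sqrt_conv C l u θ σ hCnn hθ hσ h1
    rw [hcomb] at hconv
    have hnum : m * Real.sqrt (C + t₀^2) ≤ c - D - t₀ * x i := by
      have h2 : m * (θ * Real.sqrt (C + l^2) + σ * Real.sqrt (C + u^2)) ≤
          θ * (c - D - l * x i) + σ * (c - D - u * x i) := by
        have := mul_le_mul_of_nonneg_left hml hθ
        have := mul_le_mul_of_nonneg_left hmu hσ
        nlinarith
      have h3 : m * Real.sqrt (C + t₀^2) ≤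
          m * (θ * Real.sqrt (C + l^2) + σ * Real.sqrt (C + u^2)) :=
        mul_le_mul_of_nonneg_left hconv hmnn
      have h4 : θ * (c - D - l * x i) + σ * (c - D - u * x i) = c - D - t₀ * x i := by
        linear_combination (c - D) * h1 - x i * hcomb
      linarith
    have hma : m ≤ fval x c a := by
      rw [hfa]
      exact (le_div_iff₀ hS0).mpr hnum
    rcases le_total (fval x c bl) (fval x c bu) with hcase | hcase
    · refine ⟨bl, hblbox, fun j hj => Function.update_of_ne hj _ _, Or.inl (Function.update_self _ _ _), ?_⟩
      calc fval x c bl = m := by rw [hm, min_eq_left hcase]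
        _ ≤ fval x c a := hma
    · refine ⟨bu, hbubox, fun j hj => Function.update_of_ne hj _ _, Or.inr (Function.update_self _ _ _), ?_⟩
      calc fval x c bu = m := by rw [hm, min_eq_right hcase]
        _ ≤ fval x c a := hma

private lemma toVertex
    (hbox : ∀ j, al j ≤ au j)
    (h0 : (0 : Fin n → ℝ) ∉ {a : Fin n → ℝ | ∀ j, al j ≤ a j ∧ a j ≤ au j})
    (hc : ∀ a : Fin n → ℝ, (∀ j, al j ≤ a j ∧ a j ≤ au j) → 0 ≤ c - a ⬝ᵥ x)
    (S : Finset (Fin n)) :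
    ∀ a, boxP al au a → (∀ j, j ∉ S → a j = al j ∨ a j = au j) →
    ∃ v, boxP al au v ∧ (∀ j, v j = al j ∨ v j = au j) ∧ fval x c v ≤ fval x c a := by
  induction S using Finset.induction_on with
  | empty => exact fun a ha hv => ⟨a, ha, fun j => hv j (by simp), le_refl _⟩
  | @insert i S hiS IH =>
    intro a ha hv
    obtain ⟨b, hb, hbj, hbi, hfb⟩ := step x c al au hbox h0 hc i a ha
    obtain ⟨v, hvb, hvv, hfv⟩ := IH b hb (by
      intro j hj
      rcases eq_or_ne j i with rfl | hne
      · exact hbi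
      · rw [hbj j hne]
        exact hv j (by simp [hj, hne]))
    exact ⟨v, hvb, hvv, le_trans hfv hfb⟩

end aux

/-- On a nonempty box `B = [a̲, ā]` with `0 ∉ B` on which `c − a·x ≥ 0`,
the minimum of `f(a) = (c − a·x)/‖a‖₂` is attained at a vertex of `B`. -/
theorem min_at_vertex_of_box
    {n : ℕ} (x : Fin n → ℝ) (c : ℝ) (al au : Fin n → ℝ)
    (hbox : ∀ j, al j ≤ au j)
    (h0 : (0 : Fin n → ℝ) ∉ {a : Fin n → ℝ | ∀ j, al j ≤ a j ∧ a j ≤ au j})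
    (hc : ∀ a : Fin n → ℝ, (∀ j, al j ≤ a j ∧ a j ≤ au j) → 0 ≤ c - a ⬝ᵥ x) :
    ∃ a : Fin n → ℝ, (∀ j, al j ≤ a j ∧ a j ≤ au j) ∧
      (∀ j, a j = al j ∨ a j = au j) ∧
      ∀ a' : Fin n → ℝ, (∀ j, al j ≤ a' j ∧ a' j ≤ au j) →
        (c - a ⬝ᵥ x) / Real.sqrt (∑ j, (a j) ^ 2) ≤
          (c - a' ⬝ᵥ x) / Real.sqrt (∑ j, (a' j) ^ 2) := by
  classical
  set V : Finset (Fin n → ℝ) :=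
    Finset.image (fun s : Fin n → Bool => fun j => if s j then au j else al j) Finset.univ with hV
  have hVne : V.Nonempty := ⟨_, Finset.mem_image.mpr ⟨fun _ => false, Finset.mem_univ _, rfl⟩⟩
  obtain ⟨v, hvV, hvmin⟩ := Finset.exists_min_image V (fval x c) hVne
  have hvvert : ∀ w ∈ V, ∀ j, w j = al j ∨ w j = au j := by
    intro w hw j
    obtain ⟨s, _, rfl⟩ := Finset.mem_image.mp hw
    by_cases h : s j <;> simp [h]
  have hvbox : boxP al au v := by
    intro j
    rcases hvvert v hvV j with h | h
    · rw [h]; exact ⟨le_refl _, hbox j⟩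
    · rw [h]; exact ⟨hbox j, le_refl _⟩
  refine ⟨v, hvbox, hvvert v hvV, ?_⟩
  intro a' ha'
  obtain ⟨w, hwb, hwv, hfw⟩ := toVertex x c al au hbox h0 hc Finset.univ a' ha' (fun j hj => absurd (Finset.mem_univ j) hj)
  have hwV : w ∈ V := by
    apply Finset.mem_image.mpr
    refine ⟨fun j => decide (w j = au j), Finset.mem_univ _, ?_⟩
    funext j
    by_cases h2 : w j = au j
    · simp [h2]
    · have h3 : w j = al j := (hwv j).resolve_right h2
      have h2' : ¬ (al j = au j) := h3 ▸ h2
      simp [h3, h2']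
  exact le_trans (hvmin w hwV) hfw
end

section
/- Fix x ∈ ℝ^n, c ∈ ℝ, and an index j. Let a, a' ∈ ℝ^n with a ≠ 0, a'_k = a_k for all k ≠ j, 0 ≤ a_j ≤ a'_j, x_j ≥ 0, and c − a·x ≥ 0. Then (c − a'·x)/‖a'‖₂ ≤ (c − a·x)/‖a‖₂; that is, increasing a nonnegative j-th coordinate when x_j ≥ 0 does not increase the value of the function f(a) = (c − a·x)/‖a‖₂. -/
open Matrix Finset

theorem Finset.sum_le_sum_of_eq_except {ι M : Type*} [AddCommMonoid M] [PartialOrder M]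
    [IsOrderedAddMonoid M] (s : Finset ι) {f g : ι → M} (j : ι)
    (hfg : ∀ k, k ≠ j → f k = g k) (hj : f j ≤ g j) :
    ∑ k ∈ s, f k ≤ ∑ k ∈ s, g k := by
  refine Finset.sum_le_sum fun k _ => ?_
  obtain rfl | hkj := eq_or_ne k j
  · exact hj
  · exact (hfg k hkj).le

theorem sum_sq_pos_of_ne_zero {ι R : Type*} [Fintype ι] [Ring R] [LinearOrder R]
    [IsStrictOrderedRing R] {a : ι → R} (ha : a ≠ 0) : 0 < ∑ k, a k ^ 2 := by
  obtain ⟨k, hk⟩ := Function.ne_iff.mp ha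
  exact Finset.sum_pos' (fun i _ => sq_nonneg (a i)) ⟨k, mem_univ k, sq_pos_of_ne_zero hk⟩

/-- Monotonicity of `f(a) = (c − a·x)/‖a‖₂`: increasing a nonnegative
`j`-th coordinate of `a` when `x_j ≥ 0` does not increase the value of `f`. -/
theorem monotone_coord_dot_div_norm
    {n : ℕ} (x : Fin n → ℝ) (c : ℝ) (j : Fin n) (a a' : Fin n → ℝ)
    (ha : a ≠ 0)
    (hk : ∀ k, k ≠ j → a' k = a k)
    (haj : 0 ≤ a j) (haj' : a j ≤ a' j)
    (hx : 0 ≤ x j)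
    (hc : 0 ≤ c - a ⬝ᵥ x) :
    (c - a' ⬝ᵥ x) / Real.sqrt (∑ k, (a' k) ^ 2) ≤
      (c - a ⬝ᵥ x) / Real.sqrt (∑ k, (a k) ^ 2) := by
  have hdot : a ⬝ᵥ x ≤ a' ⬝ᵥ x :=
    sum_le_sum_of_eq_except univ j (fun k hkj => by rw [hk k hkj])
      (mul_le_mul_of_nonneg_right haj' hx)
  have hnorm : Real.sqrt (∑ k, (a k) ^ 2) ≤ Real.sqrt (∑ k, (a' k) ^ 2) :=
    Real.sqrt_le_sqrt <| sum_le_sum_of_eq_except univ j (fun k hkj => by rw [hk k hkj])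
      (pow_le_pow_left₀ haj haj' 2)
  exact div_le_div₀ hc (by linarith) (Real.sqrt_pos.mpr (sum_sq_pos_of_ne_zero ha)) hnorm
end

section
/- Let [A] be an interval m×n matrix with midpoint A_c, entrywise-nonnegative radius Δ, and rows [a_i]; let [b] = [b̲, b̄] be an interval vector in ℝ^m. For each i let s_i = sup{‖a‖₂ : a ∈ [a_i]} (which equals the Euclidean norm of the componentwise magnitude vector of [a_i]). Suppose r ≥ 0, x_c ∈ ℝ^n, and y ∈ ℝ^n satisfy y ≥ x_c, y ≥ −x_c (componentwise), and for every i: (A_c x_c)_i + (Δ y)_i + r s_i ≤ b̄_i and −(A_c x_c)_i + (Δ y)_i + r s_i ≤ −b̲_i. Then the Euclidean ball {x ∈ ℝ^n : ‖x − x_c‖₂ ≤ r} is contained in the tolerance solution set Σ_∀∃([A],[b]). -/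
/-!
For `A ∈ [A]` and `‖x - x_c‖₂ ≤ r`, split `(A x)_i = a_i ⬝ x_c + a_i ⬝ (x - x_c)`.
Since `|x_c| ≤ y`, the first term lies within `(Δ y)_i` of `(A_c x_c)_i`, and by
Cauchy–Schwarz the second is at most `‖a_i‖₂ r ≤ s_i r` in absolute value, because
`|a_i|` is bounded entrywise by the magnitude of `[a_i]`.
-/

open Matrix Finset

theorem abs_le_max_abs_sub_abs_add {R : Type*} [AddCommGroup R] [LinearOrder R]
    [IsOrderedAddMonoid R] {a c d : R} (h : |a - c| ≤ d) : |a| ≤ max |c - d| |c + d| :=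
  have ⟨hac, hca⟩ := abs_sub_le_iff.1 h
  abs_le_max_abs_abs (sub_le_comm.1 hca) (sub_le_iff_le_add'.1 hac)

theorem abs_dotProduct_sub_dotProduct_le {ι R : Type*} [Fintype ι] [CommRing R] [LinearOrder R]
    [IsStrictOrderedRing R] {a c d u v : ι → R} (hac : ∀ j, |a j - c j| ≤ d j)
    (huv : ∀ j, |u j| ≤ v j) : |a ⬝ᵥ u - c ⬝ᵥ u| ≤ d ⬝ᵥ v := by
  rw [← sub_dotProduct]
  calc |(a - c) ⬝ᵥ u| ≤ ∑ j, |(a - c) j * u j| := abs_sum_le_sum_abs _ _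
    _ ≤ d ⬝ᵥ v := sum_le_sum fun j _ => by
      rw [abs_mul]
      exact mul_le_mul (hac j) (huv j) (abs_nonneg _) ((abs_nonneg _).trans (hac j))

theorem Real.abs_dotProduct_le_sqrt_mul_sqrt {ι : Type*} [Fintype ι] (a u : ι → ℝ) :
    |a ⬝ᵥ u| ≤ √(∑ j, a j ^ 2) * √(∑ j, u j ^ 2) := by
  rw [← Real.sqrt_mul (sum_nonneg fun j _ => sq_nonneg (a j))]
  exact Real.abs_le_sqrt (sum_mul_sq_le_sq_mul_sq _ _ _)

theorem Real.sqrt_sum_sq_le_of_abs_le {ι : Type*} [Fintype ι] {a b : ι → ℝ}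
    (h : ∀ j, |a j| ≤ b j) : √(∑ j, a j ^ 2) ≤ √(∑ j, b j ^ 2) :=
  Real.sqrt_le_sqrt <| sum_le_sum fun j _ =>
    sq_le_sq' (neg_le_of_abs_le (h j)) (le_of_abs_le (h j))

theorem ball_subset_tolerance_of_lp_general
    {m n : ℕ} (Ac Δ : Matrix (Fin m) (Fin n) ℝ)
    (bl bu : Fin m → ℝ)
    (s : Fin m → ℝ)
    (hs : ∀ i, s i = Real.sqrt (∑ j, (max |Ac i j - Δ i j| |Ac i j + Δ i j|) ^ 2))
    (r : ℝ) (xc y : Fin n → ℝ)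
    (hy1 : ∀ j, xc j ≤ y j) (hy2 : ∀ j, -xc j ≤ y j)
    (h1 : ∀ i, Ac.mulVec xc i + Δ.mulVec y i + r * s i ≤ bu i)
    (h2 : ∀ i, -(Ac.mulVec xc i) + Δ.mulVec y i + r * s i ≤ -(bl i)) :
    {x : Fin n → ℝ | Real.sqrt (∑ j, (x j - xc j) ^ 2) ≤ r} ⊆
      {x | ∀ A : Matrix (Fin m) (Fin n) ℝ,
        (∀ i j, |A i j - Ac i j| ≤ Δ i j) →
        ∀ i, bl i ≤ A.mulVec x i ∧ A.mulVec x i ≤ bu i} := by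
  intro x hx A hA i
  have hxc : ∀ j, |xc j| ≤ y j := fun j => abs_le.2 ⟨neg_le.1 (hy2 j), hy1 j⟩
  have hcenter : |A i ⬝ᵥ xc - Ac i ⬝ᵥ xc| ≤ Δ i ⬝ᵥ y :=
    abs_dotProduct_sub_dotProduct_le (hA i) hxc
  have hball : |A i ⬝ᵥ (x - xc)| ≤ r * s i :=
    calc |A i ⬝ᵥ (x - xc)| ≤ √(∑ j, A i j ^ 2) * √(∑ j, (x j - xc j) ^ 2) :=
          Real.abs_dotProduct_le_sqrt_mul_sqrt _ _
      _ ≤ s i * r := by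
          rw [hs i]
          refine mul_le_mul ?_ hx (Real.sqrt_nonneg _) (Real.sqrt_nonneg _)
          exact Real.sqrt_sum_sq_le_of_abs_le fun j => abs_le_max_abs_sub_abs_add (hA i j)
      _ = r * s i := mul_comm _ _
  have hsplit : A.mulVec x i = A i ⬝ᵥ xc + A i ⬝ᵥ (x - xc) := by
    rw [dotProduct_sub, add_sub_cancel]
    rfl
  rw [hsplit]
  obtain ⟨hcenter_lo, hcenter_hi⟩ := abs_le.1 hcenter
  obtain ⟨hball_lo, hball_hi⟩ := abs_le.1 hball
  have hu : Ac i ⬝ᵥ xc + Δ i ⬝ᵥ y + r * s i ≤ bu i := h1 i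
  have hl : -(Ac i ⬝ᵥ xc) + Δ i ⬝ᵥ y + r * s i ≤ -bl i := h2 i
  constructor <;> linarith

/-- Sufficient linear-programming condition for an inscribed Euclidean
ball with variable center in the tolerance solution set `Σ_∀∃([A],[b])`, with
`s_i = ‖magnitude of [a_i]‖₂` the supremum of `‖a‖₂` over the row interval. -/
theorem ball_subset_tolerance_of_lp
    {m n : ℕ} (Ac Δ : Matrix (Fin m) (Fin n) ℝ) (hΔ : ∀ i j, 0 ≤ Δ i j)
    (bl bu : Fin m → ℝ)
    (s : Fin m → ℝ)
    (hs : ∀ i, s i = Real.sqrt (∑ j, (max |Ac i j - Δ i j| |Ac i j + Δ i j|) ^ 2))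
    (r : ℝ) (hr : 0 ≤ r) (xc y : Fin n → ℝ)
    (hy1 : ∀ j, xc j ≤ y j) (hy2 : ∀ j, -xc j ≤ y j)
    (h1 : ∀ i, Ac.mulVec xc i + Δ.mulVec y i + r * s i ≤ bu i)
    (h2 : ∀ i, -(Ac.mulVec xc i) + Δ.mulVec y i + r * s i ≤ -(bl i)) :
    {x : Fin n → ℝ | Real.sqrt (∑ j, (x j - xc j) ^ 2) ≤ r} ⊆
      {x | ∀ A : Matrix (Fin m) (Fin n) ℝ,
        (∀ i j, |A i j - Ac i j| ≤ Δ i j) →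
        ∀ i, bl i ≤ A.mulVec x i ∧ A.mulVec x i ≤ bu i} :=
  ball_subset_tolerance_of_lp_general Ac Δ bl bu s hs r xc y hy1 hy2 h1 h2
end

section
/- Let [A] be an interval m×n matrix with rows [a_i] = [a̲_i, ā_i], let [b] = [b̲, b̄] be an interval vector in ℝ^m, let x_c ∈ ℝ^n and r ≥ 0. Then the Euclidean ball {x ∈ ℝ^n : ‖x − x_c‖₂ ≤ r} is contained in the tolerance solution set Σ_∀∃([A],[b]) if and only if for every i ∈ {1,…,m} and every vertex a of the box [a̲_i, ā_i] (i.e., every a with a_j ∈ {(a̲_i)_j, (ā_i)_j} for all j), both a·x_c + r‖a‖₂ ≤ b̄_i and −a·x_c + r‖a‖₂ ≤ −b̲_i hold. -/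
open Matrix Finset

private lemma sqrt_sum_smul {n : ℕ} (c : ℝ) (hc : 0 ≤ c) (a : Fin n → ℝ) :
    Real.sqrt (∑ j, (c * a j) ^ 2) = c * Real.sqrt (∑ j, (a j) ^ 2) := by
  have : (∑ j, (c * a j) ^ 2) = c ^ 2 * ∑ j, (a j) ^ 2 := by
    rw [Finset.mul_sum]; congr 1; ext j; ring
  rw [this, Real.sqrt_mul (by positivity), Real.sqrt_sq hc]

/-- Vertex linear program for the largest inscribed Euclidean ball with
variable center: the ball of radius `r` centered at `x_c` is contained in the tolerance
solution set `Σ_∀∃([A],[b])` iff for every row `i` and every vertex `a` of the box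
`[a̲_i, ā_i]`, both `a·x_c + r‖a‖₂ ≤ b̄_i` and `−a·x_c + r‖a‖₂ ≤ −b̲_i`. -/
theorem ball_subset_tolerance_iff_vertices
    {m n : ℕ} (Al Au : Matrix (Fin m) (Fin n) ℝ) (hA : ∀ i j, Al i j ≤ Au i j)
    (bl bu : Fin m → ℝ)
    (xc : Fin n → ℝ) (r : ℝ) (hr : 0 ≤ r) :
    {x : Fin n → ℝ | Real.sqrt (∑ j, (x j - xc j) ^ 2) ≤ r} ⊆
      {x | ∀ A : Matrix (Fin m) (Fin n) ℝ,
        (∀ i j, Al i j ≤ A i j ∧ A i j ≤ Au i j) →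
        ∀ i, bl i ≤ A.mulVec x i ∧ A.mulVec x i ≤ bu i} ↔
    (∀ i, ∀ a : Fin n → ℝ, (∀ j, a j = Al i j ∨ a j = Au i j) →
        a ⬝ᵥ xc + r * Real.sqrt (∑ j, (a j) ^ 2) ≤ bu i ∧
        -(a ⬝ᵥ xc) + r * Real.sqrt (∑ j, (a j) ^ 2) ≤ -(bl i)) := by
  constructor
  · -- forward direction
    intro h i a ha
    have hbound : ∀ j, Al i j ≤ a j ∧ a j ≤ Au i j := fun j => by
      rcases ha j with h' | h' <;> rw [h']
      · exact ⟨le_rfl, hA i j⟩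
      · exact ⟨hA i j, le_rfl⟩
    -- matrix with i-th row a
    set A : Matrix (Fin m) (Fin n) ℝ := Matrix.updateRow Al i a with hAdef
    have hAbox : ∀ i' j, Al i' j ≤ A i' j ∧ A i' j ≤ Au i' j := by
      intro i' j
      by_cases hii : i' = i
      · subst hii; simp only [hAdef, Matrix.updateRow_self]; exact hbound j
      · simp only [hAdef, Matrix.updateRow_ne hii]; exact ⟨le_rfl, hA i' j⟩
    have hrow : ∀ x, A.mulVec x i = a ⬝ᵥ x := by
      intro x
      simp [hAdef, Matrix.mulVec, dotProduct]
    set s : ℝ := Real.sqrt (∑ j, (a j) ^ 2) with hs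
    have hs0 : 0 ≤ s := Real.sqrt_nonneg _
    rcases eq_or_lt_of_le hs0 with hz | hp
    · -- s = 0 : use x = xc
      have hmem : xc ∈ {x : Fin n → ℝ | Real.sqrt (∑ j, (x j - xc j) ^ 2) ≤ r} := by
        simp [Real.sqrt_eq_zero', hr]
      have := h hmem A hAbox i
      rw [hrow] at this
      rw [← hz]
      constructor
      · linarith [this.2]
      · linarith [this.1]
    · -- s > 0
      constructor
      · -- upper
        set x : Fin n → ℝ := fun j => xc j + (r / s) * a j with hx
        have hmem : x ∈ {x : Fin n → ℝ | Real.sqrt (∑ j, (x j - xc j) ^ 2) ≤ r} := by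
          have : ∀ j, x j - xc j = (r / s) * a j := fun j => by simp [hx]
          simp only [Set.mem_setOf_eq, this]
          rw [sqrt_sum_smul _ (by positivity)]
          rw [← hs, div_mul_cancel₀ _ (ne_of_gt hp)]
        have := (h hmem A hAbox i).2
        rw [hrow] at this
        have hdot : a ⬝ᵥ x = a ⬝ᵥ xc + r * s := by
          simp only [dotProduct, hx]
          have : ∀ j, a j * (xc j + r / s * a j) = a j * xc j + (r / s) * (a j) ^ 2 := by
            intro j; ring
          rw [Finset.sum_congr rfl (fun j _ => this j), Finset.sum_add_distrib,
            ← Finset.mul_sum]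
          have hsq : (∑ j, (a j) ^ 2) = s ^ 2 := by
            rw [hs, Real.sq_sqrt (Finset.sum_nonneg fun j _ => sq_nonneg _)]
          rw [hsq]
          field_simp
        linarith [hdot ▸ this]
      · -- lower
        set x : Fin n → ℝ := fun j => xc j - (r / s) * a j with hx
        have hmem : x ∈ {x : Fin n → ℝ | Real.sqrt (∑ j, (x j - xc j) ^ 2) ≤ r} := by
          have : ∀ j, (x j - xc j) ^ 2 = ((r / s) * a j) ^ 2 := fun j => by simp [hx]
          simp only [Set.mem_setOf_eq]
          rw [Finset.sum_congr rfl (fun j _ => this j)]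
          rw [sqrt_sum_smul _ (by positivity)]
          rw [← hs, div_mul_cancel₀ _ (ne_of_gt hp)]
        have := (h hmem A hAbox i).1
        rw [hrow] at this
        have hdot : a ⬝ᵥ x = a ⬝ᵥ xc - r * s := by
          simp only [dotProduct, hx]
          have : ∀ j, a j * (xc j - r / s * a j) = a j * xc j - (r / s) * (a j) ^ 2 := by
            intro j; ring
          rw [Finset.sum_congr rfl (fun j _ => this j), Finset.sum_sub_distrib,
            ← Finset.mul_sum]
          have hsq : (∑ j, (a j) ^ 2) = s ^ 2 := by
            rw [hs, Real.sq_sqrt (Finset.sum_nonneg fun j _ => sq_nonneg _)]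
          rw [hsq]
          field_simp
        linarith [hdot ▸ this]
  · -- backward direction
    intro h x hx A hAbox i
    simp only [Set.mem_setOf_eq] at hx
    have key : ∀ a : Fin n → ℝ, (∀ j, a j = Al i j ∨ a j = Au i j) →
        a ⬝ᵥ x ≤ bu i ∧ bl i ≤ a ⬝ᵥ x := by
      intro a ha
      have hcs : |∑ j, a j * (x j - xc j)| ≤
          Real.sqrt (∑ j, (a j) ^ 2) * Real.sqrt (∑ j, (x j - xc j) ^ 2) := by
        rw [abs_le]
        constructor
        · have heq : (∑ j, (-(a j)) * (x j - xc j)) = -∑ j, a j * (x j - xc j) := by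
            rw [← Finset.sum_neg_distrib]
            exact Finset.sum_congr rfl fun j _ => by ring
          have heq2 : (∑ j, (-(a j)) ^ 2) = ∑ j, (a j) ^ 2 :=
            Finset.sum_congr rfl fun j _ => by ring
          have h3 := Real.sum_mul_le_sqrt_mul_sqrt Finset.univ (fun j => -(a j))
            (fun j => x j - xc j)
          rw [heq, heq2] at h3
          linarith
        · exact Real.sum_mul_le_sqrt_mul_sqrt Finset.univ a (fun j => x j - xc j)
      have hcs2 : Real.sqrt (∑ j, (a j) ^ 2) * Real.sqrt (∑ j, (x j - xc j) ^ 2) ≤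
          Real.sqrt (∑ j, (a j) ^ 2) * r :=
        mul_le_mul_of_nonneg_left hx (Real.sqrt_nonneg _)
      have hsplit : a ⬝ᵥ x = a ⬝ᵥ xc + ∑ j, a j * (x j - xc j) := by
        simp only [dotProduct]
        rw [← Finset.sum_add_distrib]
        congr 1; ext j; ring
      have habs := abs_le.mp hcs
      obtain ⟨h1, h2⟩ := h i a ha
      constructor
      · rw [hsplit]
        nlinarith [habs.2]
      · rw [hsplit]
        nlinarith [habs.1]
    -- choose vertices depending on sign of x j
    set ap : Fin n → ℝ := fun j => if 0 ≤ x j then Au i j else Al i j with hap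
    set am : Fin n → ℝ := fun j => if 0 ≤ x j then Al i j else Au i j with ham
    have hapv : ∀ j, ap j = Al i j ∨ ap j = Au i j := by
      intro j; simp only [hap]; split <;> simp
    have hamv : ∀ j, am j = Al i j ∨ am j = Au i j := by
      intro j; simp only [ham]; split <;> simp
    have hub : A.mulVec x i ≤ ap ⬝ᵥ x := by
      simp only [Matrix.mulVec, dotProduct]
      apply Finset.sum_le_sum
      intro j _
      simp only [hap]
      by_cases hxj : 0 ≤ x j
      · simp only [if_pos hxj]
        exact mul_le_mul_of_nonneg_right (hAbox i j).2 hxj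
      · simp only [if_neg hxj]
        push_neg at hxj
        exact mul_le_mul_of_nonpos_right (hAbox i j).1 (le_of_lt hxj)
    have hlb : am ⬝ᵥ x ≤ A.mulVec x i := by
      simp only [Matrix.mulVec, dotProduct]
      apply Finset.sum_le_sum
      intro j _
      simp only [ham]
      by_cases hxj : 0 ≤ x j
      · simp only [if_pos hxj]
        exact mul_le_mul_of_nonneg_right (hAbox i j).1 hxj
      · simp only [if_neg hxj]
        push_neg at hxj
        exact mul_le_mul_of_nonpos_right (hAbox i j).2 (le_of_lt hxj)
    exact ⟨le_trans (key am hamv).2 hlb, le_trans hub (key ap hapv).1⟩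
end
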